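/- arXiv:1210.8205 — 8 statements merged into one kernel-verified Lean document; each statement's English description precedes it below -/
import Mathlib

section
/- Given a line-bramble B of a graph G (a collection of connected subgraphs, each with at least 2 vertices, pairwise intersecting in at least one vertex), the collection B' = {E(X) : X ∈ B}, viewed as sets of vertices of the line graph L(G), is a bramble of L(G), and the minimum size of an edge set hitting every element of B equals the minimum size of a vertex set of L(G) hitting every element of B'. -/
open SimpleGraph

/-- A tree decomposition of a graph `G`. -/
structure TreeDecomp {V : Type} (G : SimpleGraph V) where
  ι : Type
  T : SimpleGraph ι
  connected : T.Connected
  acyclic : T.IsAcyclic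
  bag : ι → Finset V
  mem_bag : ∀ v : V, ∃ i, v ∈ bag i
  adj_bag : ∀ u v : V, G.Adj u v → ∃ i, u ∈ bag i ∧ v ∈ bag i
  coherent : ∀ v : V, (T.induce {i | v ∈ bag i}).Connected

/-- `G` has a tree decomposition of width at most `w`. -/
def HasTreewidthLE {V : Type} (G : SimpleGraph V) (w : ℕ) : Prop :=
  ∃ D : TreeDecomp G, ∀ i, (D.bag i).card ≤ w + 1

/-- The treewidth of `G`. -/
noncomputable def treewidth {V : Type} (G : SimpleGraph V) : ℕ :=
  sInf {w | HasTreewidthLE G w}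

/-- `G` has a path decomposition of width at most `w`: bags indexed by `Fin m`,
bags containing a fixed vertex are consecutive. -/
def HasPathwidthLE {V : Type} (G : SimpleGraph V) (w : ℕ) : Prop :=
  ∃ (m : ℕ) (bag : Fin m → Finset V),
    (∀ v : V, ∃ i, v ∈ bag i) ∧
    (∀ u v : V, G.Adj u v → ∃ i, u ∈ bag i ∧ v ∈ bag i) ∧
    (∀ (v : V) (i j l : Fin m), i ≤ j → j ≤ l → v ∈ bag i → v ∈ bag l → v ∈ bag j) ∧
    (∀ i, (bag i).card ≤ w + 1)

/-- The pathwidth of `G`. -/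
noncomputable def pathwidth {V : Type} (G : SimpleGraph V) : ℕ :=
  sInf {w | HasPathwidthLE G w}

/-- A bramble of a graph `H`: a collection of (vertex sets of) connected subgraphs,
pairwise touching. -/
def IsBramble {W : Type} (H : SimpleGraph W) (B : Set (Set W)) : Prop :=
  (∀ X ∈ B, (H.induce X).Connected) ∧
  (∀ X ∈ B, ∀ Y ∈ B, (X ∩ Y).Nonempty ∨ ∃ x ∈ X, ∃ y ∈ Y, H.Adj x y)

/-- A vertex set hitting every element of a bramble. -/
def IsBrambleHitting {W : Type} (B : Set (Set W)) (S : Finset W) : Prop :=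
  ∀ X ∈ B, ∃ x ∈ S, x ∈ X

/-- The order of a bramble: minimum size of a hitting set. -/
noncomputable def brambleOrder {W : Type} (B : Set (Set W)) : ℕ :=
  sInf {m | ∃ S : Finset W, IsBrambleHitting B S ∧ S.card = m}

/-- The bramble number of `H`. -/
noncomputable def brambleNumber {W : Type} (H : SimpleGraph W) : ℕ :=
  sSup {m | ∃ B : Set (Set W), IsBramble H B ∧ brambleOrder B = m}

/-- A line-bramble of `G`. -/
def IsLineBramble {V : Type} (G : SimpleGraph V) (B : Set G.Subgraph) : Prop :=
  (∀ X ∈ B, X.Connected ∧ 2 ≤ X.verts.ncard) ∧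
  (∀ X ∈ B, ∀ Y ∈ B, (X.verts ∩ Y.verts).Nonempty)

/-- An edge set hitting every member of a line-bramble. -/
def IsLBHitting {V : Type} (G : SimpleGraph V) (B : Set G.Subgraph)
    (F : Finset (Sym2 V)) : Prop :=
  ↑F ⊆ G.edgeSet ∧ ∀ X ∈ B, ∃ e ∈ F, e ∈ X.edgeSet

/-- `H` is a minimum hitting set of the line-bramble `B`. -/
def IsMinLBHitting {V : Type} (G : SimpleGraph V) (B : Set G.Subgraph)
    (H : Finset (Sym2 V)) : Prop :=
  IsLBHitting G B H ∧ ∀ F, IsLBHitting G B F → H.card ≤ F.card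

/-- The order of a line-bramble: minimum size of a hitting edge set. -/
noncomputable def lineBrambleOrder {V : Type} (G : SimpleGraph V) (B : Set G.Subgraph) : ℕ :=
  sInf {m | ∃ F : Finset (Sym2 V), IsLBHitting G B F ∧ F.card = m}

/-- The canonical line-bramble for `v` of `G`. -/
def canonicalLineBramble {V : Type} (G : SimpleGraph V) (v : V) : Set G.Subgraph :=
  {X | X.Connected ∧
    (Nat.card V < 2 * X.verts.ncard ∨ (2 * X.verts.ncard = Nat.card V ∧ v ∈ X.verts))}

/-- The support of the component of `w` in `G - H`. -/
def compSupp {V : Type} (G : SimpleGraph V) (H : Finset (Sym2 V)) (w : V) : Set V :=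
  ((G.deleteEdges ↑H).connectedComponentMk w).supp

/-- `(H, Q)` is a labelling: `H` is a hitting set of the line-bramble `B`, and `Q`
enumerates the components of `G - H` without repetition. -/
def IsLabelling {V : Type} (G : SimpleGraph V) (B : Set G.Subgraph)
    (H : Finset (Sym2 V)) {p : ℕ} (Q : Fin p → Set V) : Prop :=
  IsLBHitting G B H ∧ Function.Injective Q ∧
  (∀ i, ∃ w : V, Q i = compSupp G H w) ∧
  (∀ w : V, ∃ i, Q i = compSupp G H w)

/-- A good labelling: `|H|` minimum; then the sequence `|Q 0|, |Q 1|, …` lexicographically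
maximum; then `v` in the component of highest possible index. -/
def IsGoodLabelling {V : Type} (G : SimpleGraph V) (B : Set G.Subgraph) (v : V)
    (H : Finset (Sym2 V)) {p : ℕ} (Q : Fin p → Set V) : Prop :=
  IsLabelling G B H Q ∧
  (∀ F, IsLBHitting G B F → H.card ≤ F.card) ∧
  (∀ (H' : Finset (Sym2 V)) (p' : ℕ) (Q' : Fin p' → Set V),
      IsLabelling G B H' Q' → H'.card = H.card →
      ¬ List.Lex (· < ·) (List.ofFn fun i => (Q i).ncard) (List.ofFn fun i => (Q' i).ncard)) ∧
  (∀ (H' : Finset (Sym2 V)) (p' : ℕ) (Q' : Fin p' → Set V),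
      IsLabelling G B H' Q' → H'.card = H.card →
      (List.ofFn fun i => (Q i).ncard) = (List.ofFn fun i => (Q' i).ncard) →
      ∀ (i : Fin p) (j : Fin p'), v ∈ Q i → v ∈ Q' j → (j : ℕ) ≤ (i : ℕ))

section Aux
variable {V : Type} {G : SimpleGraph V}

lemma aux_reach_step (X : G.Subgraph)
    (e f : ↑{e : G.edgeSet | (e : Sym2 V) ∈ X.edgeSet}) {v : V}
    (he : v ∈ (e : Sym2 V)) (hf : v ∈ (f : Sym2 V)) :
    (G.lineGraph.induce {e : G.edgeSet | (e : Sym2 V) ∈ X.edgeSet}).Reachable e f := by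
  by_cases h : e = f
  · exact h ▸ Reachable.refl _
  · refine Adj.reachable ?_
    simp only [comap_adj, Function.Embedding.coe_subtype, induce]
    exact lineGraph_adj_iff_exists.mpr ⟨fun hh => h (Subtype.ext hh), v, he, hf⟩

lemma aux_reach_walk (X : G.Subgraph) {u v : X.verts} (p : X.coe.Walk u v)
    (e f : ↑{e : G.edgeSet | (e : Sym2 V) ∈ X.edgeSet})
    (he : (u : V) ∈ (e : Sym2 V)) (hf : (v : V) ∈ (f : Sym2 V)) :
    (G.lineGraph.induce {e : G.edgeSet | (e : Sym2 V) ∈ X.edgeSet}).Reachable e f := by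
  induction p generalizing e with
  | nil => exact aux_reach_step X e f he hf
  | @cons a b c h p ih =>
    have hadj : X.Adj ↑a ↑b := h
    have hg : s((a:V), (b:V)) ∈ X.edgeSet := hadj
    have hgG : s((a:V), (b:V)) ∈ G.edgeSet := X.edgeSet_subset hg
    let g : ↑{e : G.edgeSet | (e : Sym2 V) ∈ X.edgeSet} := ⟨⟨_, hgG⟩, hg⟩
    have h1 : (a : V) ∈ (g : Sym2 V) := Sym2.mem_mk_left _ _
    have h2 : (b : V) ∈ (g : Sym2 V) := Sym2.mem_mk_right _ _
    exact (aux_reach_step X e g he h1).trans (ih g h2 hf)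

lemma aux_neighbor (X : G.Subgraph) (hc : X.Connected) (h2 : 2 ≤ X.verts.ncard)
    {v : V} (hv : v ∈ X.verts) : ∃ w, X.Adj v w := by
  have hfin : X.verts.Finite := by
    by_contra h
    rw [Set.Infinite.ncard h] at h2; omega
  obtain ⟨a, ha, b, hb, hab⟩ := (Set.one_lt_ncard hfin).mp (by omega)
  have : ∃ u : X.verts, (u : V) ≠ v := by
    by_cases h : a = v
    · exact ⟨⟨b, hb⟩, by simp [← h, hab.symm]⟩
    · exact ⟨⟨a, ha⟩, h⟩
  obtain ⟨u, hu⟩ := this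
  obtain ⟨p⟩ := hc ⟨v, hv⟩ u
  cases p with
  | nil => exact absurd rfl hu
  | cons h p => exact ⟨_, h⟩

lemma aux_reach (X : G.Subgraph) (hc : X.Connected)
    (e f : ↑{e : G.edgeSet | (e : Sym2 V) ∈ X.edgeSet}) :
    (G.lineGraph.induce {e : G.edgeSet | (e : Sym2 V) ∈ X.edgeSet}).Reachable e f := by
  obtain ⟨⟨es, heG⟩, heX⟩ := e
  obtain ⟨⟨fs, hfG⟩, hfX⟩ := f
  induction es using Sym2.ind with
  | _ a b =>
  induction fs using Sym2.ind with
  | _ c d =>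
  have ha : a ∈ X.verts := X.edge_vert (Subgraph.mem_edgeSet.mp heX)
  have hcv : c ∈ X.verts := X.edge_vert (Subgraph.mem_edgeSet.mp hfX)
  obtain ⟨p⟩ := hc ⟨a, ha⟩ ⟨c, hcv⟩
  exact aux_reach_walk X p _ _ (Sym2.mem_mk_left _ _) (Sym2.mem_mk_left _ _)

end Aux

/-- a line-bramble of `G` induces a bramble of the line graph `L(G)`
of the same order. -/
theorem lineBramble_gives_bramble {V : Type} (G : SimpleGraph V) (B : Set G.Subgraph)
    (hB : IsLineBramble G B) :
    IsBramble G.lineGraph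
        {S : Set G.edgeSet | ∃ X ∈ B, S = {e : G.edgeSet | (e : Sym2 V) ∈ X.edgeSet}} ∧
    lineBrambleOrder G B =
      brambleOrder
        {S : Set G.edgeSet | ∃ X ∈ B, S = {e : G.edgeSet | (e : Sym2 V) ∈ X.edgeSet}} := by
  classical
  obtain ⟨hB1, hB2⟩ := hB
  constructor
  · constructor
    · rintro S ⟨X, hX, rfl⟩
      obtain ⟨hc, h2⟩ := hB1 X hX
      haveI : Nonempty ↑{e : G.edgeSet | (e : Sym2 V) ∈ X.edgeSet} := by
        obtain ⟨v, hv⟩ := hc.nonempty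
        obtain ⟨w, hw⟩ := aux_neighbor X hc h2 hv
        exact ⟨⟨⟨s(v, w), X.edgeSet_subset hw⟩, hw⟩⟩
      exact ⟨fun e f => aux_reach X hc e f⟩
    · rintro S ⟨X, hX, rfl⟩ T ⟨Y, hY, rfl⟩
      obtain ⟨v, hvX, hvY⟩ := hB2 X hX Y hY
      obtain ⟨w, hw⟩ := aux_neighbor X (hB1 X hX).1 (hB1 X hX).2 hvX
      obtain ⟨w', hw'⟩ := aux_neighbor Y (hB1 Y hY).1 (hB1 Y hY).2 hvY
      have heG : s(v, w) ∈ G.edgeSet := X.edgeSet_subset hw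
      have hfG : s(v, w') ∈ G.edgeSet := Y.edgeSet_subset hw'
      by_cases h : s(v, w) = s(v, w')
      · left
        refine ⟨⟨s(v, w), heG⟩, hw, ?_⟩
        rw [Set.mem_setOf_eq]
        show s(v, w) ∈ Y.edgeSet
        rw [h]; exact hw'
      · right
        refine ⟨⟨s(v, w), heG⟩, hw, ⟨s(v, w'), hfG⟩, hw', ?_⟩
        exact lineGraph_adj_iff_exists.mpr ⟨fun hh => h (congrArg Subtype.val hh), v,
          Sym2.mem_mk_left _ _, Sym2.mem_mk_left _ _⟩
  · unfold lineBrambleOrder brambleOrder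
    congr 1
    ext m
    constructor
    · rintro ⟨F, ⟨hFG, hFhit⟩, rfl⟩
      refine ⟨F.subtype (· ∈ G.edgeSet), ?_, ?_⟩
      · rintro S ⟨X, hX, rfl⟩
        obtain ⟨e, heF, heX⟩ := hFhit X hX
        exact ⟨⟨e, hFG heF⟩, Finset.mem_subtype.mpr heF, heX⟩
      · rw [Finset.card_subtype, Finset.filter_true_of_mem (fun x hx => hFG hx)]
    · rintro ⟨S, hS, rfl⟩
      refine ⟨S.image Subtype.val, ⟨?_, ?_⟩,
        Finset.card_image_of_injective _ Subtype.val_injective⟩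
      · intro e he
        simp only [Finset.coe_image, Set.mem_image, Finset.mem_coe] at he
        obtain ⟨x, _, rfl⟩ := he
        exact x.2
      · intro X hX
        obtain ⟨x, hxS, hxX⟩ := hS _ ⟨X, hX, rfl⟩
        exact ⟨↑x, Finset.mem_image_of_mem _ hxS, hxX⟩
end

section
/- For every graph G with at least 3 vertices and every vertex v of G, the canonical line-bramble for v (the set of connected subgraphs X of G with either |V(X)| > |V(G)|/2, or |V(X)| = |V(G)|/2 and v ∈ V(X)) is a line-bramble of G: each member is connected with at least two vertices, and every two members share a vertex. -/
open SimpleGraph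

/-- the canonical line-bramble for `v` is a line-bramble. -/
theorem canonicalLineBramble_isLineBramble {V : Type} [Fintype V]
    (G : SimpleGraph V) (v : V) (h3 : 3 ≤ Nat.card V) :
    IsLineBramble G (canonicalLineBramble G v) := by
  have huniv : (Set.univ : Set V).ncard = Nat.card V := Set.ncard_univ V
  have hle : ∀ S : Set V, S.ncard ≤ Nat.card V := fun S => by
    rw [← huniv]; exact Set.ncard_le_ncard (Set.subset_univ _) Set.finite_univ
  constructor
  · rintro X ⟨hc, hcard⟩
    refine ⟨hc, ?_⟩
    rcases hcard with h | ⟨h, _⟩ <;> omega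
  · rintro X ⟨hXc, hX⟩ Y ⟨hYc, hY⟩
    by_contra hemp
    rw [Set.not_nonempty_iff_eq_empty] at hemp
    have hdisj : Disjoint X.verts Y.verts := Set.disjoint_iff_inter_eq_empty.mpr hemp
    have hunion : (X.verts ∪ Y.verts).ncard = X.verts.ncard + Y.verts.ncard :=
      Set.ncard_union_eq hdisj (Set.toFinite _) (Set.toFinite _)
    have hsum : X.verts.ncard + Y.verts.ncard ≤ Nat.card V := by
      rw [← hunion]; exact hle _
    rcases hX with h1 | ⟨h1, hv1⟩ <;> rcases hY with h2 | ⟨h2, hv2⟩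
    · omega
    · omega
    · omega
    · exact hemp ▸ (⟨v, hv1, hv2⟩ : (X.verts ∩ Y.verts).Nonempty) |>.elim (fun _ h => h)
end

section
/- Let G be a graph with |V(G)| ≥ 3 and v ∈ V(G). A set H of edges of G is a hitting set of the canonical line-bramble for v if and only if every connected component of G − H has at most |V(G)|/2 vertices, and the component containing v has strictly fewer than |V(G)|/2 vertices (equivalently, v is not in a component with exactly |V(G)|/2 vertices). -/
open SimpleGraph

lemma induce_supp_connected' {V : Type} (G' : SimpleGraph V) (w : V) :
    (G'.induce (G'.connectedComponentMk w).supp).Connected := by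
  classical
  apply induce_connected_of_patches w (by simp [ConnectedComponent.mem_supp_iff])
  intro v hv
  rw [ConnectedComponent.mem_supp_iff, ConnectedComponent.eq] at hv
  obtain ⟨p⟩ := hv.symm
  refine ⟨{x | x ∈ p.support}, ?_, p.start_mem_support, p.end_mem_support, ?_⟩
  · intro x hx
    rw [ConnectedComponent.mem_supp_iff, ConnectedComponent.eq]
    exact ⟨(p.takeUntil x hx).reverse⟩
  · exact (p.connected_induce_support) _ _

def compSubgraph {V : Type} (G : SimpleGraph V) (H : Finset (Sym2 V)) (w : V) : G.Subgraph where
  verts := compSupp G H w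
  Adj a b := (G.deleteEdges ↑H).Adj a b ∧ a ∈ compSupp G H w ∧ b ∈ compSupp G H w
  adj_sub h := (G.deleteEdges_le _) h.1
  edge_vert h := h.2.1
  symm := ⟨fun _ _ h => ⟨h.1.symm, h.2.2, h.2.1⟩⟩

lemma compSubgraph_connected {V : Type} (G : SimpleGraph V) (H : Finset (Sym2 V)) (w : V) :
    (compSubgraph G H w).Connected := by
  rw [Subgraph.connected_iff']
  have h : (compSubgraph G H w).coe = (G.deleteEdges ↑H).induce (compSupp G H w) := by
    ext ⟨a, ha⟩ ⟨b, hb⟩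
    simp only [Subgraph.coe_adj, compSubgraph, comap_adj, Function.Embedding.coe_subtype]
    tauto
  rw [h]
  exact induce_supp_connected' _ w

lemma compSubgraph_edge_not_mem {V : Type} (G : SimpleGraph V) (H : Finset (Sym2 V)) (w : V)
    {e : Sym2 V} (he : e ∈ (compSubgraph G H w).edgeSet) : e ∉ H := by
  induction e using Sym2.ind with
  | _ a b =>
    rw [Subgraph.mem_edgeSet] at he
    have h1 := he.1
    rw [SimpleGraph.deleteEdges_adj] at h1
    exact fun hmem => h1.2 (by exact_mod_cast hmem)

/-- characterisation of hitting sets of the canonical line-bramble. -/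
theorem canonical_hitting_iff {V : Type} [Fintype V]
    (G : SimpleGraph V) (v : V) (h3 : 3 ≤ Nat.card V)
    (H : Finset (Sym2 V)) (hH : ↑H ⊆ G.edgeSet) :
    IsLBHitting G (canonicalLineBramble G v) H ↔
      ((∀ w : V, 2 * (compSupp G H w).ncard ≤ Nat.card V) ∧
        2 * (compSupp G H v).ncard < Nat.card V) := by
  constructor
  · rintro ⟨-, hhit⟩
    have key : ∀ w : V, 2 * (compSupp G H w).ncard ≤ Nat.card V := by
      intro w
      by_contra hlt
      push_neg at hlt
      obtain ⟨e, heH, heX⟩ := hhit (compSubgraph G H w)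
        ⟨compSubgraph_connected G H w, Or.inl hlt⟩
      exact compSubgraph_edge_not_mem G H w heX heH
    refine ⟨key, ?_⟩
    rcases lt_or_eq_of_le (key v) with h | h
    · exact h
    · exfalso
      obtain ⟨e, heH, heX⟩ := hhit (compSubgraph G H v)
        ⟨compSubgraph_connected G H v, Or.inr ⟨h, ConnectedComponent.mem_supp_iff _ _ |>.mpr rfl⟩⟩
      exact compSubgraph_edge_not_mem G H v heX heH
  · rintro ⟨hall, hv⟩
    refine ⟨hH, ?_⟩
    rintro X ⟨hXconn, hXsize⟩
    by_contra hno
    push_neg at hno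
    obtain ⟨⟨a, ha⟩⟩ := hXconn.coe.nonempty
    have hsub : X.verts ⊆ compSupp G H a := by
      intro b hb
      have hreach : (G.deleteEdges ↑H).Reachable b a :=
        Reachable.map
          (⟨Subtype.val, fun {u w} h => by
            rw [SimpleGraph.deleteEdges_adj]
            exact ⟨X.adj_sub h, fun hmem => hno _ (by exact_mod_cast hmem)
              (Subgraph.mem_edgeSet.mpr h)⟩⟩ : X.coe →g G.deleteEdges ↑H)
          (hXconn ⟨b, hb⟩ ⟨a, ha⟩)
      exact (ConnectedComponent.mem_supp_iff _ _).mpr (ConnectedComponent.sound hreach)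
    have hle : X.verts.ncard ≤ (compSupp G H a).ncard :=
      Set.ncard_le_ncard hsub (Set.toFinite _)
    rcases hXsize with h | ⟨h, hvX⟩
    · have := hall a
      omega
    · have hva : v ∈ compSupp G H a := hsub hvX
      have : compSupp G H v = compSupp G H a := by
        unfold compSupp
        rw [(ConnectedComponent.mem_supp_iff _ _).mp hva]
      rw [this] at hv
      omega
end

section
/- Let G be a graph with |V(G)| ≥ 3, v a vertex of G, and H a minimum-size hitting set of the canonical line-bramble for v. Then no edge of H has both of its endpoints in the same connected component of G − H. -/
open SimpleGraph

private lemma walk_avoid {V : Type} {G : SimpleGraph V} (a b : V) {u w : V} (p : G.Walk u w) :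
    ∃ (c : V) (r : G.Walk u c), (c = w ∨ c = a ∨ c = b) ∧
      s(a, b) ∉ r.edges ∧ (∀ f ∈ r.edges, f ∈ p.edges) ∧ (∀ x ∈ r.support, x ∈ p.support) := by
  induction p with
  | nil => exact ⟨_, SimpleGraph.Walk.nil, Or.inl rfl, by simp, by simp, by simp⟩
  | @cons u x w h p ih =>
      by_cases hu : u = a ∨ u = b
      · exact ⟨u, SimpleGraph.Walk.nil, Or.inr hu, by simp, by simp, by simp⟩
      · obtain ⟨c, r', hc, hr1, hr2, hr3⟩ := ih
        refine ⟨c, SimpleGraph.Walk.cons h r', hc, ?_, ?_, ?_⟩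
        · simp only [SimpleGraph.Walk.edges_cons, List.mem_cons]
          rintro (habe | habe)
          · rw [Sym2.eq_iff] at habe
            rcases habe with ⟨h1, h2⟩ | ⟨h1, h2⟩
            · exact hu (Or.inl h1.symm)
            · exact hu (Or.inr h2.symm)
          · exact hr1 habe
        · simp only [SimpleGraph.Walk.edges_cons, List.mem_cons]
          rintro f (rfl | hf)
          · exact Or.inl rfl
          · exact Or.inr (hr2 f hf)
        · simp only [SimpleGraph.Walk.support_cons, List.mem_cons]
          rintro z (rfl | hz)
          · exact Or.inl rfl
          · exact Or.inr (hr3 z hz)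

private lemma walk_toSubgraph_le {V : Type} {G : SimpleGraph V} {S : G.Subgraph}
    {u w : V} (p : G.Walk u w) (he : ∀ f ∈ p.edges, f ∈ S.edgeSet)
    (hs : ∀ x ∈ p.support, x ∈ S.verts) : p.toSubgraph ≤ S := by
  induction p with
  | nil =>
      simp only [SimpleGraph.Walk.toSubgraph, SimpleGraph.singletonSubgraph_le_iff]
      exact hs _ (by simp)
  | @cons u x w h p ih =>
      simp only [SimpleGraph.Walk.toSubgraph]
      refine sup_le ?_ (ih (fun f hf => he f (by simp [hf])) (fun z hz => hs z (by simp [hz])))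
      have hadj : S.Adj u x := SimpleGraph.Subgraph.mem_edgeSet.mp (he s(u, x) (by simp))
      exact SimpleGraph.subgraphOfAdj_le_of_adj S hadj

private lemma map_hom_walk {V : Type} {G : SimpleGraph V} {X : SimpleGraph.Subgraph G}
    {x y : X.verts} (q : X.coe.Walk x y) :
    (∀ f ∈ (q.map X.hom).edges, f ∈ X.edgeSet) ∧
    (∀ z ∈ (q.map X.hom).support, z ∈ X.verts) := by
  induction q with
  | nil =>
      rename_i x
      refine ⟨by simp, ?_⟩
      intro z hz; simp at hz; subst hz; exact x.2
  | @cons x x' y h q ih =>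
      refine ⟨?_, ?_⟩
      · intro f hf
        simp only [SimpleGraph.Walk.map_cons, SimpleGraph.Walk.edges_cons, List.mem_cons] at hf
        rcases hf with rfl | hf
        · exact SimpleGraph.Subgraph.mem_edgeSet.mpr h
        · exact ih.1 f hf
      · intro z hz
        simp only [SimpleGraph.Walk.map_cons, SimpleGraph.Walk.support_cons, List.mem_cons] at hz
        rcases hz with rfl | hz
        · exact x.2
        · exact ih.2 z hz

/-- no edge of a minimum hitting set has both endpoints in the same
component of `G - H`. -/
theorem minHitting_no_internal_edge {V : Type} [Fintype V]
    (G : SimpleGraph V) (v : V) (h3 : 3 ≤ Nat.card V)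
    (H : Finset (Sym2 V)) (hmin : IsMinLBHitting G (canonicalLineBramble G v) H) :
    ∀ a b : V, s(a, b) ∈ H → ¬ (G.deleteEdges ↑H).Reachable a b := by
    classical
  intro a b heH hreach
  have heG : s(a, b) ∈ G.edgeSet := hmin.1.1 heH
  obtain ⟨W0⟩ := hreach
  have hWe : ∀ f ∈ W0.edges, f ∈ G.edgeSet := fun f hf =>
    (G.edgeSet_deleteEdges (↑H : Set (Sym2 V)) ▸ W0.edges_subset_edgeSet hf).1
  set W : G.Walk a b := W0.transfer G hWe with hWdef
  have hWedges : W.edges = W0.edges := W0.edges_transfer hWe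
  have hWnotH : ∀ f ∈ W.edges, f ∉ (↑H : Set (Sym2 V)) := by
    intro f hf
    rw [hWedges] at hf
    have := W0.edges_subset_edgeSet hf
    rw [edgeSet_deleteEdges] at this
    exact this.2
  -- H.erase s(a,b) is a hitting set
  have hhit : IsLBHitting G (canonicalLineBramble G v) (H.erase s(a, b)) := by
    constructor
    · intro f hf
      exact hmin.1.1 (Finset.erase_subset _ _ hf)
    · intro X hX
      obtain ⟨f, hfH, hfX⟩ := hmin.1.2 X hX
      by_cases hfe : f = s(a, b)
      · subst hfe
        -- the hard case: X is hit only (possibly) by s(a,b)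
        have hXab : X.Adj a b := SimpleGraph.Subgraph.mem_edgeSet.mp hfX
        have haX : a ∈ X.verts := X.edge_vert hXab
        have hbX : b ∈ X.verts := X.edge_vert hXab.symm
        set Y : G.Subgraph := X.deleteEdges {s(a, b)} ⊔ W.toSubgraph with hYdef
        have hXdY : X.deleteEdges {s(a, b)} ≤ Y := le_sup_left
        have hWY : W.toSubgraph ≤ Y := le_sup_right
        have haY : a ∈ Y.verts := hWY.1 W.start_mem_verts_toSubgraph
        -- connectivity of Y
        have hreachW : ∀ (c : V) (hc : c ∈ W.support) (hcY : c ∈ Y.verts),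
            Y.coe.Reachable ⟨c, hcY⟩ ⟨a, haY⟩ := by
          intro c hc hcY
          have h1 : c ∈ W.toSubgraph.verts := W.mem_verts_toSubgraph.mpr hc
          have := W.toSubgraph_connected.coe ⟨c, h1⟩ ⟨a, W.start_mem_verts_toSubgraph⟩
          exact this.map (SimpleGraph.Subgraph.inclusion hWY)
        have hYconn : Y.Connected := by
          rw [SimpleGraph.Subgraph.connected_iff', connected_iff_exists_forall_reachable]
          refine ⟨⟨a, haY⟩, ?_⟩
          rintro ⟨y, hy⟩
          have hy' : y ∈ X.verts ∨ y ∈ W.support := by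
            have : Y.verts = X.verts ∪ W.toSubgraph.verts := by
              rw [hYdef, SimpleGraph.Subgraph.verts_sup, SimpleGraph.Subgraph.deleteEdges_verts]
            rw [this] at hy
            rcases hy with hy | hy
            · exact Or.inl hy
            · exact Or.inr (W.mem_verts_toSubgraph.mp hy)
          rcases hy' with hyX | hyW
          · -- walk in X from y to a, truncated to avoid s(a,b)
            obtain ⟨q⟩ := hX.1.coe ⟨y, hyX⟩ ⟨a, haX⟩
            set p : G.Walk y a := q.map X.hom with hpdef
            obtain ⟨hp1, hp2⟩ := map_hom_walk q
            obtain ⟨c, r, hc, hr1, hr2, hr3⟩ := walk_avoid a b p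
            have hcab : c = a ∨ c = b := by
              rcases hc with rfl | hc
              · exact Or.inl rfl
              · exact hc
            have hrle : r.toSubgraph ≤ X.deleteEdges {s(a, b)} := by
              apply walk_toSubgraph_le
              · intro f hf
                have hfX' : f ∈ X.edgeSet := hp1 f (hr2 f hf)
                have hfne : f ≠ s(a, b) := fun h => hr1 (h ▸ hf)
                induction f with
                | h x₁ x₂ =>
                  rw [SimpleGraph.Subgraph.mem_edgeSet] at hfX' ⊢
                  rw [SimpleGraph.Subgraph.deleteEdges_adj]
                  exact ⟨hfX', by simpa using hfne⟩
              · intro z hz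
                rw [SimpleGraph.Subgraph.deleteEdges_verts]
                exact hp2 z (hr3 z hz)
            have hrY : r.toSubgraph ≤ Y := le_trans hrle hXdY
            have hcY : c ∈ Y.verts := hrY.1 r.end_mem_verts_toSubgraph
            have hyY : y ∈ Y.verts := hrY.1 r.start_mem_verts_toSubgraph
            have r1 : Y.coe.Reachable ⟨y, hyY⟩ ⟨c, hcY⟩ :=
              (r.toSubgraph_connected.coe ⟨y, r.start_mem_verts_toSubgraph⟩
                ⟨c, r.end_mem_verts_toSubgraph⟩).map (SimpleGraph.Subgraph.inclusion hrY)
            have r2 : Y.coe.Reachable ⟨c, hcY⟩ ⟨a, haY⟩ := by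
              rcases hcab with rfl | rfl
              · rfl
              · exact hreachW c W.end_mem_support hcY
            exact (r1.trans r2).symm
          · exact (hreachW y hyW hy).symm
        -- Y is in the bramble
        have hXsubY : X.verts ⊆ Y.verts := by
          intro z hz
          exact hXdY.1 (by rwa [SimpleGraph.Subgraph.deleteEdges_verts])
        have hcard : X.verts.ncard ≤ Y.verts.ncard :=
          Set.ncard_le_ncard hXsubY (Set.toFinite _)
        have hYB : Y ∈ canonicalLineBramble G v := by
          refine ⟨hYconn, ?_⟩
          rcases hX.2 with hlt | ⟨heq, hv⟩
          · exact Or.inl (lt_of_lt_of_le hlt (by omega))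
          · rcases lt_or_eq_of_le (heq ▸ (by omega : 2 * X.verts.ncard ≤ 2 * Y.verts.ncard))
              with hlt | heq'
            · exact Or.inl hlt
            · exact Or.inr ⟨heq'.symm, hXsubY hv⟩
        obtain ⟨g, hgH, hgY⟩ := hmin.1.2 Y hYB
        have hgX : g ∈ X.edgeSet ∧ g ≠ s(a, b) := by
          rw [hYdef, SimpleGraph.Subgraph.edgeSet_sup] at hgY
          rcases hgY with hg | hg
          · induction g with
            | h x₁ x₂ =>
              rw [SimpleGraph.Subgraph.mem_edgeSet, SimpleGraph.Subgraph.deleteEdges_adj] at hg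
              exact ⟨SimpleGraph.Subgraph.mem_edgeSet.mpr hg.1, by simpa using hg.2⟩
          · exfalso
            exact hWnotH g (W.mem_edges_toSubgraph.mp hg) hgH
        exact ⟨g, Finset.mem_erase.mpr ⟨hgX.2, hgH⟩, hgX.1⟩
      · exact ⟨f, Finset.mem_erase.mpr ⟨hfe, hfH⟩, hfX⟩
  have h1 := hmin.2 _ hhit
  have h2 : (H.erase s(a, b)).card < H.card := Finset.card_erase_lt_of_mem heH
  omega
end

section
/- Let G = K_n be the complete graph on n ≥ 3 vertices, v a vertex, and H a minimum hitting set of the canonical line-bramble for v. Then G − H has exactly three connected components. -/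
open SimpleGraph

section AuxThree

open Finset SimpleGraph

private lemma two_mul_choose_two (x : ℕ) : 2 * Nat.choose x 2 = x * (x - 1) := by
  induction x with
  | zero => simp
  | succ y ih =>
    rw [Nat.choose_succ_succ, Nat.choose_one_right, Nat.mul_add, ih, Nat.succ_sub_one]
    cases y with
    | zero => simp
    | succ z =>
      rw [Nat.succ_sub_one]
      ring

private lemma final_ineq (n : ℕ) (hn : 4 ≤ n) :
    (n / 2) * (n - 4) < (n / 2) * ((n / 2) - 1) + (n - 1 - n / 2) * ((n - 1 - n / 2) - 1) := by
  obtain ⟨m, hm⟩ : ∃ m, m = n / 2 := ⟨_, rfl⟩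
  rw [← hm]
  rcases (by omega : n = 2 * m ∨ n = 2 * m + 1) with rfl | rfl
  · obtain ⟨q, rfl⟩ : ∃ q, m = q + 2 := ⟨m - 2, by omega⟩
    have e1 : 2 * (q + 2) - 4 = 2 * q := by omega
    have e2 : (q + 2) - 1 = q + 1 := by omega
    have e3 : 2 * (q + 2) - 1 - (q + 2) = q + 1 := by omega
    have e4 : (q + 1) - 1 = q := by omega
    rw [e1, e2, e3, e4]
    nlinarith [q.zero_le]
  · obtain ⟨q, rfl⟩ : ∃ q, m = q + 2 := ⟨m - 2, by omega⟩
    have e1 : 2 * (q + 2) + 1 - 4 = 2 * q + 1 := by omega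
    have e2 : (q + 2) - 1 = q + 1 := by omega
    have e3 : 2 * (q + 2) + 1 - 1 - (q + 2) = q + 2 := by omega
    rw [e1, e2, e3, e2]
    nlinarith [q.zero_le]

variable {n : ℕ} {κ : Type}

/-- Edges of `K_n` whose endpoints get the same colour. -/
noncomputable def ncrossSet (g : Fin n → κ) : Finset (Sym2 (Fin n)) :=
  @Finset.filter _ (fun e => ∃ c, ∀ x ∈ e, g x = c) (Classical.decPred _)
    (⊤ : SimpleGraph (Fin n)).edgeFinset

/-- Edges of `K_n` whose endpoints get different colours. -/
noncomputable def crossSet (g : Fin n → κ) : Finset (Sym2 (Fin n)) :=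
  @Finset.filter _ (fun e => ¬ ∃ c, ∀ x ∈ e, g x = c) (Classical.decPred _)
    (⊤ : SimpleGraph (Fin n)).edgeFinset


private lemma mem_crossSet {g : Fin n → κ} {e : Sym2 (Fin n)} :
    e ∈ crossSet g ↔ e ∈ (⊤ : SimpleGraph (Fin n)).edgeFinset ∧ ¬ ∃ c, ∀ x ∈ e, g x = c :=
  @Finset.mem_filter _ _ (Classical.decPred _) _ _

private lemma mem_ncrossSet {g : Fin n → κ} {e : Sym2 (Fin n)} :
    e ∈ ncrossSet g ↔ e ∈ (⊤ : SimpleGraph (Fin n)).edgeFinset ∧ ∃ c, ∀ x ∈ e, g x = c :=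
  @Finset.mem_filter _ _ (Classical.decPred _) _ _

private lemma ncross_add_cross (g : Fin n → κ) :
    (ncrossSet g).card + (crossSet g).card = n.choose 2 := by
  classical
  rw [ncrossSet, crossSet, Finset.filter_congr_decidable, Finset.filter_congr_decidable,
    Finset.card_filter_add_card_filter_not,
    SimpleGraph.card_edgeFinset_top_eq_card_choose_two, Fintype.card_fin]

private lemma fib_sum [Fintype κ] [DecidableEq κ] (g : Fin n → κ) :
    ∑ c, (Finset.univ.filter fun x => g x = c).card = n := by
  classical
  rw [← Finset.card_eq_sum_card_fiberwise (f := g) (t := Finset.univ)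
    (fun x _ => Finset.mem_univ _)]
  simp

private lemma ncross_card [Fintype κ] [DecidableEq κ] (g : Fin n → κ) :
    (ncrossSet g).card = ∑ c, ((Finset.univ.filter fun x => g x = c).card).choose 2 := by
  classical
  rw [Finset.card_eq_sum_card_fiberwise (f := fun e => g (Quot.out e).1) (t := Finset.univ)
    (fun x _ => Finset.mem_univ _)]
  refine Finset.sum_congr rfl fun c _ => ?_
  have himg : (ncrossSet g).filter (fun e => g (Quot.out e).1 = c)
      = ((⊤ : SimpleGraph {x : Fin n // g x = c}).edgeFinset).image (Sym2.map Subtype.val) := by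
    ext e
    induction e using Sym2.ind with
    | _ u w =>
      simp only [Finset.mem_filter, Finset.mem_image, ncrossSet,
        Finset.filter_congr_decidable, SimpleGraph.mem_edgeFinset, SimpleGraph.mem_edgeSet,
        SimpleGraph.top_adj]
      constructor
      · rintro ⟨⟨hne, c', hall⟩, hout⟩
        have hc' : c' = c := by
          rw [← hout]
          exact (hall _ (Sym2.out_fst_mem _)).symm
        have hu : g u = c := hc' ▸ hall u (Sym2.mem_mk_left u w)
        have hw : g w = c := hc' ▸ hall w (Sym2.mem_mk_right u w)
        refine ⟨s(⟨u, hu⟩, ⟨w, hw⟩), ?_, by simp⟩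
        simpa [Subtype.ext_iff] using hne
      · rintro ⟨e', he', hmap⟩
        revert he' hmap
        induction e' using Sym2.ind with
        | _ a b =>
          intro he' hmap
          rw [Sym2.map_pair_eq] at hmap
          have hallc : ∀ x ∈ s(u, w), g x = c := by
            rw [← hmap]
            intro x hx
            rcases Sym2.mem_iff.mp hx with rfl | rfl
            · exact a.2
            · exact b.2
          have hne : u ≠ w := by
            have hab : (a : Fin n) ≠ (b : Fin n) := fun h => he' (Subtype.ext h)
            rcases Sym2.eq_iff.mp hmap with ⟨h1, h2⟩ | ⟨h1, h2⟩
            · rw [← h1, ← h2]; exact hab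
            · rw [← h1, ← h2]; exact hab.symm
          exact ⟨⟨hne, c, hallc⟩, hallc _ (Sym2.out_fst_mem _)⟩
  rw [himg, Finset.card_image_of_injective _ (Sym2.map.injective Subtype.val_injective),
    SimpleGraph.card_edgeFinset_top_eq_card_choose_two, Fintype.card_subtype]

private lemma cross_sub (H : Finset (Sym2 (Fin n))) :
    crossSet (fun x => ((⊤ : SimpleGraph (Fin n)).deleteEdges ↑H).connectedComponentMk x) ⊆ H := by
  intro e
  induction e using Sym2.ind with
  | _ u w =>
    intro he
    obtain ⟨heE, hnc⟩ := mem_crossSet.mp he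
    by_contra heH
    have hadj : ((⊤ : SimpleGraph (Fin n)).deleteEdges ↑H).Adj u w := by
      rw [SimpleGraph.deleteEdges_adj]
      exact ⟨(SimpleGraph.mem_edgeSet _).mp (SimpleGraph.mem_edgeFinset.mp heE),
        fun h => heH (Finset.mem_coe.mp h)⟩
    refine hnc ⟨(((⊤ : SimpleGraph (Fin n)).deleteEdges ↑H).connectedComponentMk u),
      fun x hx => ?_⟩
    rcases Sym2.mem_iff.mp hx with rfl | rfl
    · rfl
    · exact (SimpleGraph.ConnectedComponent.connectedComponentMk_eq_of_adj hadj).symm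

private lemma walk_reach {V : Type} {D G : SimpleGraph V} (hle : D ≤ G)
    (c : D.ConnectedComponent) {a b : V} (p : D.Walk a b) :
    ∀ ha : a ∈ c.supp, ∃ hb : b ∈ c.supp,
      ((SimpleGraph.toSubgraph D hle).induce c.supp).coe.Reachable ⟨a, ha⟩ ⟨b, hb⟩ := by
  induction p with
  | nil => exact fun ha => ⟨ha, SimpleGraph.Reachable.refl _⟩
  | @cons x y z h q ih =>
    intro ha
    have hy : y ∈ c.supp := by
      rw [SimpleGraph.ConnectedComponent.mem_supp_iff] at ha ⊢
      rw [← ha]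
      exact (SimpleGraph.ConnectedComponent.connectedComponentMk_eq_of_adj h).symm
    obtain ⟨hb, hr⟩ := ih hy
    refine ⟨hb, SimpleGraph.Reachable.trans (SimpleGraph.Adj.reachable ?_) hr⟩
    exact ⟨ha, hy, h⟩

private lemma comp_subgraph_connected {V : Type} {D G : SimpleGraph V} (hle : D ≤ G)
    (c : D.ConnectedComponent) : ((SimpleGraph.toSubgraph D hle).induce c.supp).Connected := by
  obtain ⟨w, rfl⟩ := c.exists_rep
  rw [SimpleGraph.Subgraph.connected_iff]
  constructor
  · constructor
    rintro ⟨a, ha⟩ ⟨b, hb⟩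
    have ha2 : D.connectedComponentMk a = Quot.mk D.Reachable w := ha
    have hb2 : D.connectedComponentMk b = Quot.mk D.Reachable w := hb
    have hab : D.Reachable a b :=
      SimpleGraph.ConnectedComponent.exact (ha2.trans hb2.symm)
    obtain ⟨p⟩ := hab
    obtain ⟨hb', hr⟩ := walk_reach hle _ p ha
    exact hr
  · exact ⟨w, rfl⟩

private lemma comp_le (v : Fin n) {H : Finset (Sym2 (Fin n))}
    (hhit : IsLBHitting (⊤ : SimpleGraph (Fin n))
      (canonicalLineBramble (⊤ : SimpleGraph (Fin n)) v) H)
    (c : ((⊤ : SimpleGraph (Fin n)).deleteEdges ↑H).ConnectedComponent) :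
    ¬ (n < 2 * c.supp.ncard ∨ (2 * c.supp.ncard = n ∧ v ∈ c.supp)) := by
  intro hcase
  have hXB : (SimpleGraph.toSubgraph ((⊤ : SimpleGraph (Fin n)).deleteEdges ↑H) le_top).induce
      c.supp ∈ canonicalLineBramble (⊤ : SimpleGraph (Fin n)) v := by
    refine ⟨comp_subgraph_connected le_top c, ?_⟩
    rw [show Nat.card (Fin n) = n from by simp]
    exact hcase
  obtain ⟨e, heH, heX⟩ := hhit.2 _ hXB
  have hsub : ((SimpleGraph.toSubgraph ((⊤ : SimpleGraph (Fin n)).deleteEdges ↑H) le_top).induce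
      c.supp).edgeSet ⊆ ((⊤ : SimpleGraph (Fin n)).deleteEdges ↑H).edgeSet := by
    intro e'
    induction e' using Sym2.ind with
    | _ a b =>
      intro he'
      rw [SimpleGraph.Subgraph.mem_edgeSet] at he'
      exact (SimpleGraph.mem_edgeSet _).mpr he'.2.2
  have heD := hsub heX
  rw [SimpleGraph.edgeSet_deleteEdges] at heD
  exact heD.2 (Finset.mem_coe.mpr heH)

private lemma cross_hits [DecidableEq κ] (hn : 3 ≤ n) (v : Fin n) (g : Fin n → κ)
    (hfib : ∀ c, 2 * (Finset.univ.filter fun x => g x = c).card ≤ n)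
    (hv : 2 * (Finset.univ.filter fun x => g x = g v).card < n) :
    IsLBHitting (⊤ : SimpleGraph (Fin n)) (canonicalLineBramble (⊤ : SimpleGraph (Fin n)) v)
      (crossSet g) := by
  constructor
  · intro e he
    rw [Finset.mem_coe] at he
    exact SimpleGraph.mem_edgeFinset.mp (mem_crossSet.mp he).1
  · intro X hX
    obtain ⟨hconn, hsize⟩ := hX
    rw [show Nat.card (Fin n) = n from by simp] at hsize
    by_cases hsame : ∀ u, u ∈ X.verts → ∀ w, w ∈ X.verts → g u = g w
    · exfalso
      obtain ⟨u₀, hu₀⟩ := hconn.nonempty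
      have hcard : X.verts.ncard ≤ (Finset.univ.filter fun x => g x = g u₀).card := by
        have h1 : X.verts.ncard ≤ ({x | g x = g u₀} : Set (Fin n)).ncard :=
          Set.ncard_le_ncard (fun x hx => hsame x hx u₀ hu₀) (Set.toFinite _)
        have h2 : ({x | g x = g u₀} : Set (Fin n))
            = ↑(Finset.univ.filter fun x => g x = g u₀) := by
          ext x; simp
        rw [h2, Set.ncard_coe_finset] at h1
        exact h1
      rcases hsize with h | ⟨h, hvX⟩
      · have := hfib (g u₀); omega
      · have hgv : g v = g u₀ := hsame v hvX u₀ hu₀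
        rw [hgv] at hv
        omega
    · push_neg at hsame
      obtain ⟨u, hu, w, hw, hgne⟩ := hsame
      obtain ⟨p⟩ := hconn.coe.preconnected ⟨u, hu⟩ ⟨w, hw⟩
      obtain ⟨d, _, hdS, hdnS⟩ := p.exists_boundary_dart {x : X.verts | g ↑x = g u}
        (by simp) (by simpa using hgne.symm)
      have hadj : X.Adj ↑d.fst ↑d.snd := d.adj
      refine ⟨s(↑d.fst, ↑d.snd), ?_, SimpleGraph.Subgraph.mem_edgeSet.mpr hadj⟩
      rw [mem_crossSet]
      refine ⟨SimpleGraph.mem_edgeFinset.mpr ((SimpleGraph.mem_edgeSet _).mpr (X.adj_sub hadj)), ?_⟩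
      rintro ⟨c, hall⟩
      have h1 := hall (↑d.fst) (Sym2.mem_mk_left _ _)
      have h2 := hall (↑d.snd) (Sym2.mem_mk_right _ _)
      apply hdnS
      show g ↑d.snd = g u
      rw [h2, ← h1]
      exact hdS

end AuxThree

/-- for `K_n` (`n ≥ 3`), `G - H` has exactly three components. -/
theorem completeGraph_three_components (n : ℕ) (hn : 3 ≤ n) (v : Fin n)
    (H : Finset (Sym2 (Fin n)))
    (hmin : IsMinLBHitting (⊤ : SimpleGraph (Fin n))
      (canonicalLineBramble (⊤ : SimpleGraph (Fin n)) v) H) :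
    Nat.card (((⊤ : SimpleGraph (Fin n)).deleteEdges ↑H).ConnectedComponent) = 3 := by
  classical
  set D := (⊤ : SimpleGraph (Fin n)).deleteEdges ↑H with hD
  have hfin : Finite D.ConnectedComponent := Quot.finite _
  have instF : Fintype D.ConnectedComponent := Fintype.ofFinite _
  set g : Fin n → D.ConnectedComponent := D.connectedComponentMk with hg
  set a : D.ConnectedComponent → ℕ :=
    fun c => (Finset.univ.filter fun x => g x = c).card with ha
  have hsum : ∑ c, a c = n := fib_sum g
  have hpos : ∀ c, 1 ≤ a c := by
    intro c
    obtain ⟨w, rfl⟩ := c.exists_rep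
    exact Finset.card_pos.mpr ⟨w, Finset.mem_filter.mpr ⟨Finset.mem_univ _, rfl⟩⟩
  have hsupp : ∀ c : D.ConnectedComponent, c.supp.ncard = a c := by
    intro c
    show c.supp.ncard = (Finset.univ.filter fun x => g x = c).card
    rw [← Set.ncard_coe_finset]
    congr 1
    ext x
    simp [hg, SimpleGraph.ConnectedComponent.mem_supp_iff]
  have hcomp := fun c => comp_le v hmin.1 c
  rw [← hD] at hcomp
  have hle : ∀ c, 2 * a c ≤ n := by
    intro c
    have hcl := hcomp c
    rw [hsupp c] at hcl
    by_contra hcon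
    exact hcl (Or.inl (by omega))
  have hvlt : 2 * a (g v) < n := by
    have h1 := hcomp (g v)
    rw [hsupp (g v)] at h1
    have h2 : v ∈ (g v).supp := rfl
    have h3 := hle (g v)
    rcases Nat.lt_or_ge (2 * a (g v)) n with h | h
    · exact h
    · exact absurd (Or.inr ⟨by omega, h2⟩) h1
  -- construction of a good colouring
  obtain ⟨A, hA, hAcard⟩ := Finset.exists_subset_card_eq
    (s := Finset.univ.erase v) (n := n / 2)
    (by rw [Finset.card_erase_of_mem (Finset.mem_univ v), Finset.card_univ, Fintype.card_fin]
        omega)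
  set g₀ : Fin n → Fin 3 := fun x => if x = v then 0 else if x ∈ A then 1 else 2 with hg₀
  have hvA : v ∉ A := fun h => (Finset.mem_erase.mp (hA h)).1 rfl
  have hfib0 : (Finset.univ.filter fun x => g₀ x = 0) = {v} := by
    ext x
    by_cases hx : x = v
    · subst hx; simp [g₀]
    · by_cases hxA : x ∈ A <;> simp [g₀, hx, hxA]
  have hfib1 : (Finset.univ.filter fun x => g₀ x = 1) = A := by
    ext x
    by_cases hx : x = v
    · subst hx; simp [g₀, hvA]
    · by_cases hxA : x ∈ A <;> simp [g₀, hx, hxA]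
  have hfibsum := fib_sum g₀
  rw [Fin.sum_univ_three, hfib0, hfib1, Finset.card_singleton, hAcard] at hfibsum
  have hfib2 : (Finset.univ.filter fun x => g₀ x = 2).card = n - 1 - n / 2 := by omega
  have hg₀v : g₀ v = 0 := by simp [g₀]
  have hhitF : IsLBHitting (⊤ : SimpleGraph (Fin n))
      (canonicalLineBramble (⊤ : SimpleGraph (Fin n)) v) (crossSet g₀) := by
    refine cross_hits hn v g₀ ?_ ?_
    · intro c
      fin_cases c
      · show 2 * (Finset.univ.filter fun x => g₀ x = 0).card ≤ n
        rw [hfib0, Finset.card_singleton]; omega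
      · show 2 * (Finset.univ.filter fun x => g₀ x = 1).card ≤ n
        rw [hfib1, hAcard]; omega
      · show 2 * (Finset.univ.filter fun x => g₀ x = 2).card ≤ n
        rw [hfib2]; omega
    · rw [hg₀v, hfib0, Finset.card_singleton]; omega
  have hHle : H.card ≤ (crossSet g₀).card := hmin.2 _ hhitF
  have hcrossH : crossSet g ⊆ H := cross_sub H
  have h1 := ncross_add_cross g
  have h2 := ncross_add_cross g₀
  have h3 : (crossSet g).card ≤ H.card := Finset.card_le_card hcrossH
  have hM : ∑ c, ((Finset.univ.filter fun x => g₀ x = c).card).choose 2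
      ≤ ∑ c, (a c).choose 2 := by
    have hv1 : (ncrossSet g).card = ∑ c, (a c).choose 2 := ncross_card g
    have hv2 := ncross_card g₀
    omega
  rw [Fin.sum_univ_three, hfib0, hfib1, Finset.card_singleton, hAcard, hfib2] at hM
  have hM' : (n / 2).choose 2 + (n - 1 - n / 2).choose 2 ≤ ∑ c, (a c).choose 2 := by
    have h10 : Nat.choose 1 2 = 0 := by decide
    omega
  set k := Fintype.card D.ConnectedComponent with hk
  have hklb : 2 * n < k * n := by
    calc 2 * n = ∑ c, 2 * a c := by rw [← Finset.mul_sum, hsum]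
    _ < ∑ _c : D.ConnectedComponent, n :=
        Finset.sum_lt_sum (fun c _ => hle c) ⟨g v, Finset.mem_univ _, hvlt⟩
    _ = k * n := by rw [Finset.sum_const, Finset.card_univ, smul_eq_mul]
  have hk3 : 3 ≤ k := by
    by_contra hc
    have : k * n ≤ 2 * n := Nat.mul_le_mul_right n (by omega)
    omega
  have hk4 : ¬ 4 ≤ k := by
    intro hk4
    have hnk : k ≤ n := by
      rw [← hsum]
      calc k = ∑ _c : D.ConnectedComponent, 1 := by
            rw [Finset.sum_const, Finset.card_univ, smul_eq_mul, mul_one]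
      _ ≤ ∑ c, a c := Finset.sum_le_sum fun c _ => hpos c
    have hsum2 : ∑ c, (a c - 1) = n - k := by
      have e1 : ∑ c, ((a c - 1) + 1) = n := by
        conv_rhs => rw [← hsum]
        exact Finset.sum_congr rfl fun c _ => Nat.sub_add_cancel (hpos c)
      rw [Finset.sum_add_distrib, Finset.sum_const, Finset.card_univ, smul_eq_mul,
        mul_one] at e1
      omega
    have hbound : 2 * ∑ c, (a c).choose 2 ≤ (n / 2) * (n - k) := by
      calc 2 * ∑ c, (a c).choose 2 = ∑ c, (a c * (a c - 1)) := by
            rw [Finset.mul_sum]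
            exact Finset.sum_congr rfl fun c _ => two_mul_choose_two _
      _ ≤ ∑ c, (n / 2) * (a c - 1) := by
            refine Finset.sum_le_sum fun c _ => ?_
            exact Nat.mul_le_mul_right _ (by have := hle c; omega)
      _ = (n / 2) * (n - k) := by rw [← Finset.mul_sum, hsum2]
    have hnum : (n / 2) * (n - 4)
        < (n / 2) * ((n / 2) - 1) + (n - 1 - n / 2) * ((n - 1 - n / 2) - 1) :=
      final_ineq n (by omega)
    have hmono : (n / 2) * (n - k) ≤ (n / 2) * (n - 4) :=
      Nat.mul_le_mul_left _ (by omega)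
    have e1 := two_mul_choose_two (n / 2)
    have e2 := two_mul_choose_two (n - 1 - n / 2)
    omega
  have hkval : k = 3 := by omega
  rw [Nat.card_eq_fintype_card]
  exact hkval
end

section
/- Let G = K_n with n ≥ 3, v a vertex, and H a minimum hitting set of the canonical line-bramble for v. Label the components of G − H as Q₁, Q₂, Q₃ with |V(Q₁)| ≥ |V(Q₂)| ≥ |V(Q₃)|. If n is odd then |V(Q₁)| = |V(Q₂)| = (n−1)/2 and |V(Q₃)| = 1; if n is even then |V(Q₁)| = n/2, |V(Q₂)| = n/2 − 1 and |V(Q₃)| = 1. -/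
open SimpleGraph

set_option linter.unusedSectionVars false
set_option linter.unusedVariables false
set_option maxHeartbeats 1600000
open Finset


lemma fiber_sum_sq {α β : Type} [Fintype α] [DecidableEq α] [DecidableEq β] [Fintype β]
    (c : α → β) :
    ((Finset.univ : Finset (α × α)).filter fun p => c p.1 = c p.2).card
      = ∑ b, ((Finset.univ.filter fun a => c a = b).card)
            * ((Finset.univ.filter fun a => c a = b).card) := by
  have hset : ((Finset.univ : Finset (α × α)).filter fun p => c p.1 = c p.2)
      = Finset.univ.biUnion (fun b : β =>
          (Finset.univ.filter fun a => c a = b) ×ˢ (Finset.univ.filter fun a => c a = b)) := by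
    ext ⟨u, w⟩
    simp only [mem_filter, mem_univ, true_and, mem_biUnion, mem_product]
    constructor
    · intro h; exact ⟨c w, h, rfl⟩
    · rintro ⟨b, h1, h2⟩; rw [h1, h2]
  rw [hset, Finset.card_biUnion]
  · simp [Finset.card_product]
  · intro b _ b' _ hbb'
    simp only [Finset.disjoint_left, mem_product, mem_filter, mem_univ, true_and]
    rintro ⟨u, w⟩ ⟨h1, -⟩ ⟨h2, -⟩
    exact hbb' (h1 ▸ h2 ▸ rfl)

lemma cross_card_lemma {α β : Type} [Fintype α] [DecidableEq α] [DecidableEq β] [Fintype β]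
    (c : α → β) :
    2 * (((Finset.univ : Finset (α × α)).filter fun p => c p.1 ≠ c p.2).image
          (fun p => Sym2.mk p.1 p.2)).card
      + ∑ b, ((Finset.univ.filter fun a => c a = b).card)
            * ((Finset.univ.filter fun a => c a = b).card)
      = Fintype.card α * Fintype.card α := by
  set s := ((Finset.univ : Finset (α × α)).filter fun p => c p.1 ≠ c p.2) with hs
  have hcard : s.card = 2 * (s.image (fun p => Sym2.mk p.1 p.2)).card := by
    rw [Finset.card_eq_sum_card_image (fun p => Sym2.mk p.1 p.2) s]
    rw [Finset.sum_congr rfl (g := fun _ => 2), Finset.sum_const, smul_eq_mul, mul_comm]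
    intro e he
    obtain ⟨⟨x, y⟩, hxy, rfl⟩ := Finset.mem_image.mp he
    have hxyne : c x ≠ c y := by simpa [hs] using hxy
    have hne : x ≠ y := fun h => hxyne (h ▸ rfl)
    have : s.filter (fun p => Sym2.mk p.1 p.2 = Sym2.mk x y) = {(x, y), (y, x)} := by
      ext ⟨u, w⟩
      simp only [mem_filter, hs, mem_univ, true_and, mem_insert, mem_singleton,
        Prod.mk.injEq, Sym2.eq_iff, Prod.swap_prod_mk]
      constructor
      · rintro ⟨-, h | h⟩
        · left; exact ⟨h.1, h.2⟩
        · right; exact ⟨h.1, h.2⟩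
      · rintro (⟨rfl, rfl⟩ | ⟨rfl, rfl⟩)
        · exact ⟨hxyne, Or.inl ⟨rfl, rfl⟩⟩
        · exact ⟨fun h => hxyne h.symm, Or.inr ⟨rfl, rfl⟩⟩
    rw [this, Finset.card_insert_of_notMem (by simp [hne]),
      Finset.card_singleton]
  have hsplit := Finset.card_filter_add_card_filter_not
    (s := (Finset.univ : Finset (α × α))) (p := fun p => c p.1 = c p.2)
  have hss : (Finset.univ.filter fun p : α × α => ¬ c p.1 = c p.2) = s := rfl
  rw [hss] at hsplit
  rw [← hcard, ← fiber_sum_sq c]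
  have : ((Finset.univ : Finset (α × α))).card = Fintype.card α * Fintype.card α := by
    simp [Fintype.card_prod]
  omega



lemma card_fin_lt_filter (n m : ℕ) (hn : 0 < n) (h : m ≤ n) :
    ((Finset.univ : Finset (Fin n)).filter fun i : Fin n => (i : ℕ) < m).card = m := by
  have : ((Finset.univ : Finset (Fin n)).filter fun i : Fin n => (i : ℕ) < m).card
      = (Finset.range m).card := by
    apply Finset.card_bij' (fun (i : Fin n) _ => (i : ℕ))
      (fun (j : ℕ) _ => (⟨j % n, Nat.mod_lt _ hn⟩ : Fin n))
    · intro a ha; simp only [mem_filter, mem_univ, true_and] at ha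
      simp only [Finset.mem_range]; omega
    · intro a ha; simp only [Finset.mem_range] at ha
      simp only [mem_filter, mem_univ, true_and]
      rw [Nat.mod_eq_of_lt (by omega)]; omega
    · intro a ha; apply Fin.ext; simp only [Nat.mod_eq_of_lt a.isLt]
    · intro a ha; simp only [Finset.mem_range] at ha; simp only
      rw [Nat.mod_eq_of_lt (by omega)]
  simpa using this

lemma card_fin_between_filter (n m k : ℕ) (hn : 0 < n) (hk : k ≤ n) (hmk : m ≤ k) :
    ((Finset.univ : Finset (Fin n)).filter
      fun i : Fin n => ¬ (i : ℕ) < m ∧ (i : ℕ) < k).card = k - m := by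
  have : ((Finset.univ : Finset (Fin n)).filter
      fun i : Fin n => ¬ (i : ℕ) < m ∧ (i : ℕ) < k).card = (Finset.range (k - m)).card := by
    apply Finset.card_bij' (fun (i : Fin n) _ => (i : ℕ) - m)
      (fun (j : ℕ) _ => (⟨(j + m) % n, Nat.mod_lt _ hn⟩ : Fin n))
    · intro a ha; simp only [mem_filter, mem_univ, true_and] at ha
      simp only [Finset.mem_range]; omega
    · intro a ha; simp only [Finset.mem_range] at ha
      simp only [mem_filter, mem_univ, true_and]
      have : (a + m) % n = a + m := Nat.mod_eq_of_lt (by omega)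
      rw [this]; omega
    · intro a ha; simp only [mem_filter, mem_univ, true_and] at ha; apply Fin.ext
      simp only
      have : (a : ℕ) - m + m = (a : ℕ) := by omega
      rw [this, Nat.mod_eq_of_lt a.isLt]
    · intro a ha; simp only [Finset.mem_range] at ha; simp only
      have : (a + m) % n = a + m := Nat.mod_eq_of_lt (by omega)
      rw [this]; omega
  simpa using this



lemma const_on_connected_subgraph {V : Type} {G : SimpleGraph V} (X : G.Subgraph)
    (hX : X.Connected) {β : Type} (f : V → β)
    (hf : ∀ x y, X.Adj x y → f x = f y) :
    ∀ x ∈ X.verts, ∀ y ∈ X.verts, f x = f y := by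
  intro x hx y hy
  have hreach : X.coe.Reachable ⟨x, hx⟩ ⟨y, hy⟩ := hX.coe ⟨x, hx⟩ ⟨y, hy⟩
  obtain ⟨p⟩ := hreach
  have : ∀ (u w : X.verts) (q : X.coe.Walk u w), f u = f w := by
    intro u w q
    induction q with
    | nil => rfl
    | cons h q ih => exact (hf _ _ h).trans ih
  exact this _ _ p

/-- The subgraph of `⊤` induced by a connected component of `G.deleteEdges s`. -/
def compSub {V : Type} (G' : SimpleGraph V) (hle : G' ≤ (⊤ : SimpleGraph V))
    (K : G'.ConnectedComponent) : (⊤ : SimpleGraph V).Subgraph where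
  verts := K.supp
  Adj x y := G'.Adj x y ∧ x ∈ K.supp ∧ y ∈ K.supp
  adj_sub h := hle h.1
  edge_vert h := h.2.1
  symm := ⟨by rintro x y ⟨h, hx, hy⟩; exact ⟨h.symm, hy, hx⟩⟩

lemma compSub_connected {V : Type} (G' : SimpleGraph V) (hle : G' ≤ (⊤ : SimpleGraph V))
    (K : G'.ConnectedComponent) : (compSub G' hle K).Connected := by
  rw [SimpleGraph.Subgraph.connected_iff]
  constructor
  · constructor
    rintro ⟨x, hx⟩ ⟨y, hy⟩
    have hx' : x ∈ K.supp := hx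
    have hy' : y ∈ K.supp := hy
    have hreach : G'.Reachable x y := by
      rw [ConnectedComponent.mem_supp_iff] at hx' hy'
      exact ConnectedComponent.exact (hx'.trans hy'.symm)
    obtain ⟨p⟩ := hreach
    have key : ∀ (u w : V) (q : G'.Walk u w) (hu : u ∈ K.supp) (hw : w ∈ K.supp),
        (compSub G' hle K).coe.Reachable ⟨u, hu⟩ ⟨w, hw⟩ := by
      intro u w q
      induction q with
      | nil => intro hu hw; rfl
      | @cons a b c hab q ih =>
        intro hu hw
        have hb : b ∈ K.supp := by
          rw [ConnectedComponent.mem_supp_iff] at hu ⊢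
          rw [← hu]
          exact (ConnectedComponent.sound hab.reachable).symm
        have hadj : (compSub G' hle K).coe.Adj ⟨a, hu⟩ ⟨b, hb⟩ := ⟨hab, hu, hb⟩
        exact hadj.reachable.trans (ih hb hw)
    exact key x y p hx' hy'
  · obtain ⟨w, hw⟩ := K.exists_rep
    exact ⟨w, by simp only [compSub, ConnectedComponent.mem_supp_iff]; exact hw⟩



lemma nat_add_le_mul_succ {a b : ℕ} (ha : 1 ≤ a) (hb : 1 ≤ b) : a + b ≤ a * b + 1 := by
  obtain ⟨x, rfl⟩ := Nat.exists_eq_add_of_le ha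
  obtain ⟨y, rfl⟩ := Nat.exists_eq_add_of_le hb
  nlinarith

lemma nat_mul_eq_add_pred {a b : ℕ} (ha : 1 ≤ a) (hb : 1 ≤ b) (h : a * b + 1 = a + b) :
    a = 1 ∨ b = 1 := by
  obtain ⟨x, rfl⟩ := Nat.exists_eq_add_of_le ha
  obtain ⟨y, rfl⟩ := Nat.exists_eq_add_of_le hb
  have hxy : x * y = 0 := by nlinarith
  rcases Nat.mul_eq_zero.mp hxy with h' | h' <;> omega

section Classify
variable {β : Type} [Fintype β] [DecidableEq β]

lemma sum_f_eq (a : β → ℕ) (m : ℕ) (hle : ∀ K, a K ≤ m) (N : ℕ) (hsum : ∑ K, a K = N) :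
    (∑ K, a K * (m - a K)) + (∑ K, a K * a K) = m * N := by
  rw [← Finset.sum_add_distrib]
  have h : ∀ K ∈ Finset.univ, a K * (m - a K) + a K * a K = a K * m := by
    intro K _
    obtain ⟨d, hd⟩ := Nat.exists_eq_add_of_le (hle K)
    rw [hd, Nat.add_sub_cancel_left]; ring
  rw [Finset.sum_congr rfl h, ← Finset.sum_mul, hsum]; ring

lemma f_lower (a : β → ℕ) (m : ℕ) (hpos : ∀ K, 1 ≤ a K) (hle : ∀ K, a K ≤ m)
    {K : β} (hK : a K < m) : m ≤ a K * (m - a K) + 1 := by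
  have h1 := hpos K
  have h2 : 1 ≤ m - a K := by omega
  have := nat_add_le_mul_succ h1 h2
  omega

lemma T_sum_bound (a : β → ℕ) (m : ℕ) (hpos : ∀ K, 1 ≤ a K) (hle : ∀ K, a K ≤ m) :
    (Finset.univ.filter fun K => a K < m).card * m
      ≤ (∑ K ∈ Finset.univ.filter (fun K => a K < m), a K * (m - a K))
        + (Finset.univ.filter fun K => a K < m).card := by
  set T := Finset.univ.filter fun K => a K < m with hT
  have h1 : ∀ K ∈ T, m ≤ a K * (m - a K) + 1 := by
    intro K hK
    rw [hT, Finset.mem_filter] at hK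
    exact f_lower a m hpos hle hK.2
  calc T.card * m = ∑ _K ∈ T, m := by rw [Finset.sum_const, smul_eq_mul, mul_comm]
    _ ≤ ∑ K ∈ T, (a K * (m - a K) + 1) := Finset.sum_le_sum h1
    _ = (∑ K ∈ T, a K * (m - a K)) + T.card := by rw [Finset.sum_add_distrib]; simp

lemma classify_odd (a : β → ℕ) (m : ℕ) (hm : 1 ≤ m)
    (hpos : ∀ K, 1 ≤ a K) (hle : ∀ K, a K ≤ m)
    (hsum : ∑ K, a K = 2 * m + 1)
    (hsq : 2 * (m * m) + 1 ≤ ∑ K, a K * a K) :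
    ∃ K₁ K₂ K₃ : β, K₁ ≠ K₂ ∧ K₁ ≠ K₃ ∧ K₂ ≠ K₃ ∧
      a K₁ = m ∧ a K₂ = m ∧ a K₃ = 1 ∧ ∀ K, K = K₁ ∨ K = K₂ ∨ K = K₃ := by
  have hS := sum_f_eq a m hle _ hsum
  have hmul : m * (2 * m + 1) = 2 * (m * m) + m := by ring
  have hS1 : (∑ K, a K * (m - a K)) + 1 ≤ m := by omega
  rcases eq_or_lt_of_le hm with hm1 | hm2
  · -- m = 1
    have hall : ∀ K, a K = 1 := fun K => le_antisymm (hm1 ▸ hle K) (hpos K)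
    have hcard : (Finset.univ : Finset β).card = 3 := by
      have : ∑ K, a K = (Finset.univ : Finset β).card := by
        rw [Finset.sum_congr rfl (fun K _ => hall K)]; simp
      omega
    obtain ⟨x, y, z, hxy, hxz, hyz, huniv⟩ := Finset.card_eq_three.mp hcard
    refine ⟨x, y, z, hxy, hxz, hyz, by rw [hall x]; omega, by rw [hall y]; omega, hall z, ?_⟩
    intro K
    have : K ∈ (Finset.univ : Finset β) := Finset.mem_univ K
    rw [huniv] at this
    simpa using this
  · -- m ≥ 2
    set T := Finset.univ.filter fun K => a K < m with hT
    have hTsub : (∑ K ∈ T, a K * (m - a K)) ≤ ∑ K, a K * (m - a K) :=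
      Finset.sum_le_sum_of_subset (Finset.subset_univ T)
    have hTb := T_sum_bound a m hpos hle
    rw [← hT] at hTb
    -- T.card ≤ 1
    have hTcard : T.card ≤ 1 := by
      by_contra hc
      push_neg at hc
      have h2 : 2 * m ≤ T.card * m := Nat.mul_le_mul_right m (by omega)
      have e1 : T.card * (m - 1) + T.card = T.card * m := by
        obtain ⟨m', rfl⟩ := Nat.exists_eq_add_of_le hm
        simp only [Nat.add_sub_cancel_left]; ring
      have h3 : T.card * (m - 1) ≤ m - 1 := by omega
      have h4 : 2 * (m - 1) ≤ T.card * (m - 1) := Nat.mul_le_mul_right _ (by omega)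
      omega
    have hTne : T.Nonempty := by
      rw [Finset.nonempty_iff_ne_empty]
      intro hemp
      have hall : ∀ K, a K = m := by
        intro K
        by_contra hne
        have : K ∈ T := by rw [hT, Finset.mem_filter]; exact ⟨Finset.mem_univ K, lt_of_le_of_ne (hle K) hne⟩
        rw [hemp] at this; exact absurd this (Finset.notMem_empty K)
      have hmm : m * (Finset.univ : Finset β).card = 2 * m + 1 := by
        rw [← hsum, Finset.sum_congr rfl (fun K _ => hall K), Finset.sum_const, smul_eq_mul,
          mul_comm]
      obtain ⟨c, hc⟩ : ∃ c, (Finset.univ : Finset β).card = c := ⟨_, rfl⟩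
      rw [hc] at hmm
      rcases c with _ | _ | _ | c'
      · omega
      · omega
      · omega
      · have h3 : m * 3 ≤ m * (c' + 1 + 1 + 1) := Nat.mul_le_mul_left m (by omega)
        omega
    have hT1 : T.card = 1 := le_antisymm hTcard (Finset.card_pos.mpr hTne)
    obtain ⟨K₃, hK3⟩ := Finset.card_eq_one.mp hT1
    have hK3mem : a K₃ < m := by
      have : K₃ ∈ T := by rw [hK3]; exact Finset.mem_singleton_self K₃
      rw [hT, Finset.mem_filter] at this; exact this.2
    have hout : ∀ K, K ≠ K₃ → a K = m := by
      intro K hne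
      by_contra h
      have : K ∈ T := by
        rw [hT, Finset.mem_filter]
        exact ⟨Finset.mem_univ K, lt_of_le_of_ne (hle K) h⟩
      rw [hK3, Finset.mem_singleton] at this
      exact hne this
    have hsplit : ∑ K ∈ Finset.univ \ {K₃}, a K + a K₃ = 2 * m + 1 := by
      rw [← hsum]
      exact (Finset.sum_eq_sum_sdiff_singleton_add (Finset.mem_univ K₃) a).symm
    have hdiff : ∑ K ∈ Finset.univ \ {K₃}, a K = ((Finset.univ : Finset β).card - 1) * m := by
      have h1 : ∑ K ∈ Finset.univ \ {K₃}, a K = ∑ _K ∈ Finset.univ \ {K₃}, m :=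
        Finset.sum_congr rfl (fun K hK => by
          rw [Finset.mem_sdiff, Finset.mem_singleton] at hK
          exact hout K hK.2)
      rw [h1, Finset.sum_const, smul_eq_mul, Finset.card_sdiff_of_subset (by simp), Finset.card_singleton]
    obtain ⟨k, hk⟩ : ∃ k, (Finset.univ : Finset β).card - 1 = k := ⟨_, rfl⟩
    rw [hk] at hdiff
    have hcard1 : 1 ≤ (Finset.univ : Finset β).card := Finset.card_pos.mpr ⟨K₃, Finset.mem_univ _⟩
    have hka : k * m + a K₃ = 2 * m + 1 := by omega
    have hk2 : k = 2 ∧ a K₃ = 1 := by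
      have ha3 := hpos K₃
      rcases k with _ | _ | _ | k'
      · omega
      · omega
      · exact ⟨by omega, by omega⟩
      · exfalso
        have h3 : 3 * m ≤ (k' + 1 + 1 + 1) * m := Nat.mul_le_mul_right m (by omega)
        omega
    have hcard3 : (Finset.univ : Finset β).card = 3 := by omega
    obtain ⟨x, y, z, hxy, hxz, hyz, huniv⟩ := Finset.card_eq_three.mp hcard3
    have hKmem : K₃ = x ∨ K₃ = y ∨ K₃ = z := by
      have : K₃ ∈ (Finset.univ : Finset β) := Finset.mem_univ K₃
      rw [huniv] at this; simpa using this
    have hcover : ∀ K : β, K = x ∨ K = y ∨ K = z := by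
      intro K
      have : K ∈ (Finset.univ : Finset β) := Finset.mem_univ K
      rw [huniv] at this; simpa using this
    rcases hKmem with rfl | rfl | rfl
    · exact ⟨y, z, K₃, hyz, fun h => hxy h.symm, fun h => hxz h.symm,
        hout y (fun h => hxy h.symm), hout z (fun h => hxz h.symm), hk2.2,
        fun K => by rcases hcover K with h | h | h <;> tauto⟩
    · exact ⟨x, z, K₃, hxz, hxy, fun h => hyz h.symm,
        hout x hxy, hout z (fun h => hyz h.symm), hk2.2,
        fun K => by rcases hcover K with h | h | h <;> tauto⟩
    · exact ⟨x, y, K₃, hxy, hxz, hyz,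
        hout x hxz, hout y hyz, hk2.2,
        fun K => by rcases hcover K with h | h | h <;> tauto⟩

lemma classify_even (a : β → ℕ) (m : ℕ) (hm : 2 ≤ m)
    (hpos : ∀ K, 1 ≤ a K) (hle : ∀ K, a K ≤ m)
    (Kv : β) (hKv : a Kv < m)
    (hsum : ∑ K, a K = 2 * m)
    (hsq : m * m + (m - 1) * (m - 1) + 1 ≤ ∑ K, a K * a K) :
    ∃ K₁ K₂ K₃ : β, K₁ ≠ K₂ ∧ K₁ ≠ K₃ ∧ K₂ ≠ K₃ ∧
      a K₁ = m ∧ a K₂ = m - 1 ∧ a K₃ = 1 ∧ ∀ K, K = K₁ ∨ K = K₂ ∨ K = K₃ := by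
  obtain ⟨m', rfl⟩ : ∃ m', m = m' + 2 := ⟨m - 2, by omega⟩
  have hm1 : m' + 2 - 1 = m' + 1 := rfl
  rw [hm1] at hsq
  have hS := sum_f_eq a (m' + 2) hle _ hsum
  have hmul : (m' + 2) * (2 * (m' + 2)) =
      ((m' + 2) * (m' + 2) + (m' + 1) * (m' + 1) + 1) + 2 * (m' + 1) := by ring
  have hS1 : (∑ K, a K * (m' + 2 - a K)) ≤ 2 * m' + 2 := by omega
  set T := Finset.univ.filter fun K => a K < m' + 2 with hT
  have hTsub : (∑ K ∈ T, a K * (m' + 2 - a K)) ≤ ∑ K, a K * (m' + 2 - a K) :=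
    Finset.sum_le_sum_of_subset (Finset.subset_univ T)
  have hTb := T_sum_bound a (m' + 2) hpos hle
  rw [← hT] at hTb
  have hfT : ∀ K ∈ T, m' + 2 ≤ a K * (m' + 2 - a K) + 1 := by
    intro K hK
    rw [hT, Finset.mem_filter] at hK
    exact f_lower a (m' + 2) hpos hle hK.2
  -- |T| ≤ 2
  have hTcard : T.card ≤ 2 := by
    by_contra hc
    push_neg at hc
    have h2 : 3 * (m' + 2) ≤ T.card * (m' + 2) := Nat.mul_le_mul_right _ (by omega)
    have h3 : T.card ≤ Fintype.card β := Finset.card_le_univ T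
    -- T.card * (m'+2) ≤ sum_T f + T.card ≤ (2m'+2) + T.card
    -- so T.card*(m'+1) ≤ 2m'+2, with T.card ≥ 3 : 3m'+3 ≤ 2m'+2 impossible
    have e1 : T.card * (m' + 1) + T.card = T.card * (m' + 2) := by ring
    have h4 : 3 * (m' + 1) ≤ T.card * (m' + 1) := Nat.mul_le_mul_right _ (by omega)
    omega
  have hKvT : Kv ∈ T := by rw [hT, Finset.mem_filter]; exact ⟨Finset.mem_univ _, hKv⟩
  have hTne : 1 ≤ T.card := Finset.card_pos.mpr ⟨Kv, hKvT⟩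
  -- sum over complement
  have hout : ∀ K, K ∉ T → a K = m' + 2 := by
    intro K hK
    rw [hT, Finset.mem_filter] at hK
    push_neg at hK
    exact le_antisymm (hle K) (hK (Finset.mem_univ K))
  have hdiff : ∑ K ∈ Finset.univ \ T, a K = ((Finset.univ : Finset β).card - T.card) * (m' + 2) := by
    have h1 : ∑ K ∈ Finset.univ \ T, a K = ∑ _K ∈ Finset.univ \ T, (m' + 2) :=
      Finset.sum_congr rfl (fun K hK => by
        rw [Finset.mem_sdiff] at hK
        exact hout K hK.2)
    rw [h1, Finset.sum_const, smul_eq_mul, Finset.card_sdiff_of_subset (Finset.subset_univ T)]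
  have hsplitsum : ∑ K ∈ Finset.univ \ T, a K + ∑ K ∈ T, a K = 2 * (m' + 2) := by
    rw [Finset.sum_sdiff (Finset.subset_univ T), hsum]
  obtain ⟨k, hk⟩ : ∃ k, (Finset.univ : Finset β).card - T.card = k := ⟨_, rfl⟩
  rw [hk] at hdiff
  -- case on T.card
  have hTcases : T.card = 1 ∨ T.card = 2 := by omega
  rcases hTcases with hTc | hTc
  · -- T.card = 1
    exfalso
    obtain ⟨K₀, hK0⟩ := Finset.card_eq_one.mp hTc
    have hK0mem : a K₀ < m' + 2 := by
      have : K₀ ∈ T := by rw [hK0]; exact Finset.mem_singleton_self K₀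
      rw [hT, Finset.mem_filter] at this; exact this.2
    have hsumT : ∑ K ∈ T, a K = a K₀ := by rw [hK0, Finset.sum_singleton]
    have hpos0 := hpos K₀
    have hka : k * (m' + 2) + a K₀ = 2 * (m' + 2) := by omega
    rcases k with _ | _ | _ | k'
    · omega
    · omega
    · omega
    · have h3 : 3 * (m' + 2) ≤ (k' + 1 + 1 + 1) * (m' + 2) := Nat.mul_le_mul_right _ (by omega)
      omega
  · -- T.card = 2
    obtain ⟨K₂, K₃, hK23, hK23eq⟩ := Finset.card_eq_two.mp hTc
    have hK2mem : K₂ ∈ T := by rw [hK23eq]; simp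
    have hK3mem : K₃ ∈ T := by rw [hK23eq]; simp
    have hb : a K₂ < m' + 2 := by rw [hT, Finset.mem_filter] at hK2mem; exact hK2mem.2
    have hc : a K₃ < m' + 2 := by rw [hT, Finset.mem_filter] at hK3mem; exact hK3mem.2
    have hsumT : ∑ K ∈ T, a K = a K₂ + a K₃ := by rw [hK23eq, Finset.sum_pair hK23]
    have hpos2 := hpos K₂
    have hpos3 := hpos K₃
    have hka : k * (m' + 2) + (a K₂ + a K₃) = 2 * (m' + 2) := by omega
    have hk1 : k = 1 ∧ a K₂ + a K₃ = m' + 2 := by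
      rcases k with _ | _ | _ | k'
      · omega
      · omega
      · omega
      · have h3 : 3 * (m' + 2) ≤ (k' + 1 + 1 + 1) * (m' + 2) := Nat.mul_le_mul_right _ (by omega)
        omega
    -- f values
    have hsumTf : ∑ K ∈ T, a K * (m' + 2 - a K)
        = a K₂ * (m' + 2 - a K₂) + a K₃ * (m' + 2 - a K₃) := by
      rw [hK23eq, Finset.sum_pair hK23]
    have hf2 := hfT K₂ hK2mem
    have hf3 := hfT K₃ hK3mem
    have hf2eq : a K₂ * (m' + 2 - a K₂) + 1 = a K₂ + (m' + 2 - a K₂) := by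
      have hub : a K₂ * (m' + 2 - a K₂) ≤ m' + 1 := by omega
      have hlb := nat_add_le_mul_succ hpos2 (show 1 ≤ m' + 2 - a K₂ by omega)
      omega
    have hf3eq : a K₃ * (m' + 2 - a K₃) + 1 = a K₃ + (m' + 2 - a K₃) := by
      have hub : a K₃ * (m' + 2 - a K₃) ≤ m' + 1 := by omega
      have hlb := nat_add_le_mul_succ hpos3 (show 1 ≤ m' + 2 - a K₃ by omega)
      omega
    have h2cases : a K₂ = 1 ∨ a K₂ = m' + 1 := by
      rcases nat_mul_eq_add_pred hpos2 (show 1 ≤ m' + 2 - a K₂ by omega) hf2eq with h | h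
      · exact Or.inl h
      · right; omega
    -- the outside component
    have hcompl : (Finset.univ \ T).card = 1 := by
      have hcle := Finset.card_le_univ T
      rw [Finset.card_sdiff_of_subset (Finset.subset_univ T)]
      omega
    obtain ⟨K₁, hK1⟩ := Finset.card_eq_one.mp hcompl
    have hK1nT : K₁ ∉ T := by
      have : K₁ ∈ Finset.univ \ T := by rw [hK1]; exact Finset.mem_singleton_self K₁
      rw [Finset.mem_sdiff] at this; exact this.2
    have ha1 : a K₁ = m' + 2 := hout K₁ hK1nT
    have hcover : ∀ K, K = K₁ ∨ K = K₂ ∨ K = K₃ := by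
      intro K
      by_cases hKT : K ∈ T
      · rw [hK23eq] at hKT; simp at hKT; tauto
      · have : K ∈ Finset.univ \ T := by rw [Finset.mem_sdiff]; exact ⟨Finset.mem_univ _, hKT⟩
        rw [hK1, Finset.mem_singleton] at this; tauto
    have hne12 : K₁ ≠ K₂ := fun h => hK1nT (h ▸ hK2mem)
    have hne13 : K₁ ≠ K₃ := fun h => hK1nT (h ▸ hK3mem)
    rcases h2cases with h2 | h2
    · -- a K₂ = 1, so a K₃ = m' + 1
      have h3 : a K₃ = m' + 1 := by omega
      exact ⟨K₁, K₃, K₂, hne13, hne12, Ne.symm hK23, ha1, h3, h2,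
        fun K => by rcases hcover K with h | h | h <;> tauto⟩
    · have h3 : a K₃ = 1 := by omega
      exact ⟨K₁, K₂, K₃, hne12, hne13, hK23, ha1, h2, h3,
        fun K => by rcases hcover K with h | h | h <;> tauto⟩

end Classify


/-- sizes of the three components of `K_n - H`. -/
theorem completeGraph_component_sizes (n : ℕ) (hn : 3 ≤ n) (v : Fin n)
    (H : Finset (Sym2 (Fin n)))
    (hmin : IsMinLBHitting (⊤ : SimpleGraph (Fin n))
      (canonicalLineBramble (⊤ : SimpleGraph (Fin n)) v) H) :
    ∃ w₁ w₂ w₃ : Fin n,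
      (compSupp (⊤ : SimpleGraph (Fin n)) H w₁ ≠ compSupp (⊤ : SimpleGraph (Fin n)) H w₂ ∧
       compSupp (⊤ : SimpleGraph (Fin n)) H w₁ ≠ compSupp (⊤ : SimpleGraph (Fin n)) H w₃ ∧
       compSupp (⊤ : SimpleGraph (Fin n)) H w₂ ≠ compSupp (⊤ : SimpleGraph (Fin n)) H w₃) ∧
      (∀ w : Fin n, compSupp (⊤ : SimpleGraph (Fin n)) H w = compSupp (⊤ : SimpleGraph (Fin n)) H w₁ ∨
        compSupp (⊤ : SimpleGraph (Fin n)) H w = compSupp (⊤ : SimpleGraph (Fin n)) H w₂ ∨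
        compSupp (⊤ : SimpleGraph (Fin n)) H w = compSupp (⊤ : SimpleGraph (Fin n)) H w₃) ∧
      (compSupp (⊤ : SimpleGraph (Fin n)) H w₃).ncard ≤ (compSupp (⊤ : SimpleGraph (Fin n)) H w₂).ncard ∧
      (compSupp (⊤ : SimpleGraph (Fin n)) H w₂).ncard ≤ (compSupp (⊤ : SimpleGraph (Fin n)) H w₁).ncard ∧
      (Odd n →
        (compSupp (⊤ : SimpleGraph (Fin n)) H w₁).ncard = (n - 1) / 2 ∧
        (compSupp (⊤ : SimpleGraph (Fin n)) H w₂).ncard = (n - 1) / 2 ∧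
        (compSupp (⊤ : SimpleGraph (Fin n)) H w₃).ncard = 1) ∧
      (Even n →
        (compSupp (⊤ : SimpleGraph (Fin n)) H w₁).ncard = n / 2 ∧
        (compSupp (⊤ : SimpleGraph (Fin n)) H w₂).ncard = n / 2 - 1 ∧
        (compSupp (⊤ : SimpleGraph (Fin n)) H w₃).ncard = 1) := by
  classical
  set G : SimpleGraph (Fin n) := ⊤ with hG
  set Gd : SimpleGraph (Fin n) := G.deleteEdges ↑H with hGd
  haveI : Fintype Gd.ConnectedComponent := Fintype.ofFinite _
  set c : Fin n → Gd.ConnectedComponent := Gd.connectedComponentMk with hc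
  set A : Gd.ConnectedComponent → ℕ :=
    fun K => (Finset.univ.filter fun x => c x = K).card with hA
  -- supp sizes
  have hsupp : ∀ K : Gd.ConnectedComponent, K.supp.ncard = A K := by
    intro K
    have : K.supp = ↑(Finset.univ.filter fun x => c x = K) := by
      ext x
      simp [ConnectedComponent.mem_supp_iff, hc]
    rw [this, Set.ncard_coe_finset]
  have hpos : ∀ K : Gd.ConnectedComponent, 1 ≤ A K := by
    intro K
    obtain ⟨w, hw⟩ := K.exists_rep
    apply Finset.card_pos.mpr
    exact ⟨w, Finset.mem_filter.mpr ⟨Finset.mem_univ _, hw⟩⟩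
  have hsum : ∑ K : Gd.ConnectedComponent, A K = n := by
    have h1 := Finset.card_eq_sum_card_fiberwise
      (s := (Finset.univ : Finset (Fin n))) (t := (Finset.univ : Finset Gd.ConnectedComponent))
      (f := c) (fun x _ => Finset.mem_univ (c x))
    simp only [Finset.card_univ, Fintype.card_fin] at h1
    rw [← h1]
  -- component subgraphs hit by H give size bounds
  have hle : Gd ≤ G := by rw [hGd]; exact SimpleGraph.deleteEdges_le _
  have hbound : ∀ K : Gd.ConnectedComponent, 2 * A K ≤ n ∧ (2 * A K = n → v ∉ K.supp) := by
    intro K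
    have hXconn := compSub_connected Gd hle K
    have hnotmem : ∀ e ∈ H, e ∉ (compSub Gd hle K).edgeSet := by
      intro e heH heX
      induction e with
      | h x y =>
        rw [SimpleGraph.Subgraph.mem_edgeSet] at heX
        have : Gd.Adj x y := heX.1
        rw [hGd, SimpleGraph.deleteEdges_adj] at this
        exact this.2 (Finset.mem_coe.mpr heH)
    have hverts : (compSub Gd hle K).verts.ncard = A K := by
      have : (compSub Gd hle K).verts = K.supp := rfl
      rw [this, hsupp]
    constructor
    · by_contra hgt
      push_neg at hgt
      have hmem : compSub Gd hle K ∈ canonicalLineBramble G v := by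
        refine ⟨hXconn, Or.inl ?_⟩
        rw [hverts, Nat.card_eq_fintype_card, Fintype.card_fin]
        omega
      obtain ⟨e, heH, heX⟩ := hmin.1.2 _ hmem
      exact hnotmem e heH heX
    · intro heq hvmem
      have hmem : compSub Gd hle K ∈ canonicalLineBramble G v := by
        refine ⟨hXconn, Or.inr ⟨?_, hvmem⟩⟩
        rw [hverts, Nat.card_eq_fintype_card, Fintype.card_fin]
        omega
      obtain ⟨e, heH, heX⟩ := hmin.1.2 _ hmem
      exact hnotmem e heH heX
  -- the cross edges of the components are contained in H
  set crossH : Finset (Sym2 (Fin n)) :=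
    ((Finset.univ : Finset (Fin n × Fin n)).filter fun p => c p.1 ≠ c p.2).image
      (fun p => Sym2.mk p.1 p.2) with hcrossH
  have hsubH : crossH ⊆ H := by
    intro e he
    obtain ⟨⟨x, y⟩, hxy, rfl⟩ := Finset.mem_image.mp he
    have hne : c x ≠ c y := (Finset.mem_filter.mp hxy).2
    have hxyne : x ≠ y := fun h => hne (h ▸ rfl)
    by_contra heH
    have hadj : Gd.Adj x y := by
      rw [hGd, SimpleGraph.deleteEdges_adj]
      refine ⟨by rw [hG]; exact hxyne, fun hmem => heH (Finset.mem_coe.mp hmem)⟩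
    exact hne (ConnectedComponent.sound hadj.reachable)
  have hHcross := Finset.card_le_card hsubH
  have hcrossEq := cross_card_lemma c
  rw [← hcrossH] at hcrossEq
  simp only [Fintype.card_fin] at hcrossEq
  -- the optimal hitting set F
  set m : ℕ := n / 2 with hm
  set lastv : Fin n := ⟨n - 1, by omega⟩ with hlastv
  set σ : Equiv.Perm (Fin n) := Equiv.swap v lastv with hσ
  set base : Fin n → Fin 3 :=
    fun i => if (i : ℕ) < m then 0 else if (i : ℕ) < n - 1 then 1 else 2 with hbase
  set pc : Fin n → Fin 3 := fun x => base (σ x) with hpc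
  set F : Finset (Sym2 (Fin n)) :=
    ((Finset.univ : Finset (Fin n × Fin n)).filter fun p => pc p.1 ≠ pc p.2).image
      (fun p => Sym2.mk p.1 p.2) with hF
  have hfib : ∀ j : Fin 3, (Finset.univ.filter fun x => pc x = j).card
      = (Finset.univ.filter fun i => base i = j).card := by
    intro j
    apply Finset.card_bij' (fun x _ => σ x) (fun i _ => σ.symm i)
    · intro a ha
      rw [Finset.mem_filter] at ha ⊢
      exact ⟨Finset.mem_univ _, ha.2⟩
    · intro a ha
      rw [Finset.mem_filter] at ha ⊢
      refine ⟨Finset.mem_univ _, ?_⟩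
      show base (σ (σ.symm a)) = j
      rw [Equiv.apply_symm_apply]
      exact ha.2
    · intro a _; exact Equiv.symm_apply_apply σ a
    · intro a _; exact Equiv.apply_symm_apply σ a
  have hb0 : (Finset.univ.filter fun i : Fin n => base i = 0).card = m := by
    have heq : (Finset.univ.filter fun i : Fin n => base i = 0)
        = Finset.univ.filter fun i : Fin n => (i : ℕ) < m := by
      ext i
      simp only [Finset.mem_filter, Finset.mem_univ, true_and, hbase]
      split_ifs with h1 h2
      · simp [h1]
      · constructor
        · intro h; exact absurd h (by decide)
        · intro h; exact absurd h h1
      · constructor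
        · intro h; exact absurd h (by decide)
        · intro h; exact absurd h h1
    rw [heq]
    exact card_fin_lt_filter n m (by omega) (by omega)
  have hb1 : (Finset.univ.filter fun i : Fin n => base i = 1).card = n - 1 - m := by
    have heq : (Finset.univ.filter fun i : Fin n => base i = 1)
        = Finset.univ.filter fun i : Fin n => ¬ (i : ℕ) < m ∧ (i : ℕ) < n - 1 := by
      ext i
      simp only [Finset.mem_filter, Finset.mem_univ, true_and, hbase]
      split_ifs with h1 h2
      · constructor
        · intro h; exact absurd h (by decide)
        · intro h; exact absurd h1 h.1
      · constructor
        · intro _; exact ⟨h1, h2⟩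
        · intro _; rfl
      · constructor
        · intro h; exact absurd h (by decide)
        · intro h; exact absurd h.2 h2
    rw [heq]
    exact card_fin_between_filter n m (n - 1) (by omega) (by omega) (by omega)
  have hb2 : (Finset.univ.filter fun i : Fin n => base i = 2).card = 1 := by
    have heq : (Finset.univ.filter fun i : Fin n => base i = 2)
        = Finset.univ.filter fun i : Fin n => ¬ (i : ℕ) < n - 1 ∧ (i : ℕ) < n := by
      ext i
      have hisLt := i.isLt
      simp only [Finset.mem_filter, Finset.mem_univ, true_and, hbase]
      split_ifs with h1 h2
      · constructor
        · intro h; exact absurd h (by decide)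
        · intro h; exact absurd (by omega : (i : ℕ) < n - 1) h.1
      · constructor
        · intro h; exact absurd h (by decide)
        · intro h; exact absurd h2 h.1
      · constructor
        · intro _; exact ⟨h2, hisLt⟩
        · intro _; rfl
    rw [heq]
    have := card_fin_between_filter n (n - 1) n (by omega) (by omega) (by omega)
    rw [this]
    omega
  have hpcv : pc v = 2 := by
    rw [hpc]
    simp only
    rw [hσ, Equiv.swap_apply_left, hbase, hlastv]
    simp only
    rw [if_neg (by omega), if_neg (by omega)]
  -- F is a hitting set
  have hFhit : IsLBHitting G (canonicalLineBramble G v) F := by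
    constructor
    · intro e he
      rw [Finset.mem_coe, hF, Finset.mem_image] at he
      obtain ⟨⟨x, y⟩, hxy, rfl⟩ := he
      have hne : pc x ≠ pc y := (Finset.mem_filter.mp hxy).2
      have hxyne : x ≠ y := fun h => hne (h ▸ rfl)
      rw [hG]
      exact hxyne
    · intro X hX
      by_contra hno
      push_neg at hno
      have hconst : ∀ x ∈ X.verts, ∀ y ∈ X.verts, pc x = pc y := by
        apply const_on_connected_subgraph X hX.1 pc
        intro x y hxy
        by_contra hne
        have heF : Sym2.mk x y ∈ F := by
          rw [hF, Finset.mem_image]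
          exact ⟨(x, y), Finset.mem_filter.mpr ⟨Finset.mem_univ _, hne⟩, rfl⟩
        exact hno _ heF (SimpleGraph.Subgraph.mem_edgeSet.mpr hxy)
      have hXne : X.verts.Nonempty := hX.1.nonempty
      have hsubX : ∀ x₀ ∈ X.verts,
          X.verts.ncard ≤ (Finset.univ.filter fun x => pc x = pc x₀).card := by
        intro x₀ hx₀
        rw [← Set.ncard_coe_finset]
        apply Set.ncard_le_ncard _ (Finset.finite_toSet _)
        intro y hy
        rw [Finset.mem_coe, Finset.mem_filter]
        exact ⟨Finset.mem_univ _, hconst y hy x₀ hx₀⟩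
      have hjbound : ∀ j : Fin 3, (Finset.univ.filter fun x => pc x = j).card ≤ m := by
        intro j
        rw [hfib]
        have h3 : j = 0 ∨ j = 1 ∨ j = 2 := by
          rcases j with ⟨jv, hjv⟩
          rcases (by omega : jv = 0 ∨ jv = 1 ∨ jv = 2) with rfl | rfl | rfl
          · exact Or.inl rfl
          · exact Or.inr (Or.inl rfl)
          · exact Or.inr (Or.inr rfl)
        rcases h3 with rfl | rfl | rfl
        · rw [hb0]
        · rw [hb1]; omega
        · rw [hb2]; omega
      rcases hX.2 with hbig | ⟨heq, hvX⟩
      · rw [Nat.card_eq_fintype_card, Fintype.card_fin] at hbig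
        obtain ⟨x₀, hx₀⟩ := hXne
        have h1 := hsubX x₀ hx₀
        have h2 := hjbound (pc x₀)
        omega
      · rw [Nat.card_eq_fintype_card, Fintype.card_fin] at heq
        have h1 := hsubX v hvX
        rw [hpcv, hfib, hb2] at h1
        omega
  have hHF : H.card ≤ F.card := hmin.2 F hFhit
  have hcrossEqF := cross_card_lemma pc
  rw [← hF] at hcrossEqF
  simp only [Fintype.card_fin] at hcrossEqF
  have hsumb : ∑ j : Fin 3, (Finset.univ.filter fun x => pc x = j).card
      * (Finset.univ.filter fun x => pc x = j).card
      = m * m + (n - 1 - m) * (n - 1 - m) + 1 := by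
    rw [Fin.sum_univ_three, hfib, hfib, hfib, hb0, hb1, hb2]
  rw [hsumb] at hcrossEqF
  have hcrossEq2 : 2 * crossH.card + ∑ K : Gd.ConnectedComponent, A K * A K = n * n :=
    hcrossEq
  clear hcrossEq
  -- the key inequality
  have hsq : m * m + (n - 1 - m) * (n - 1 - m) + 1
      ≤ ∑ K : Gd.ConnectedComponent, A K * A K := by omega
  -- component size upper bounds
  have hAle : ∀ K, A K ≤ m := by
    intro K
    have := (hbound K).1
    omega
  -- membership of v
  have hvsupp : v ∈ (c v).supp := by
    rw [ConnectedComponent.mem_supp_iff]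
  -- finish, by parity
  have hfinish : ∃ K₁ K₂ K₃ : Gd.ConnectedComponent, K₁ ≠ K₂ ∧ K₁ ≠ K₃ ∧ K₂ ≠ K₃ ∧
      (∀ K, K = K₁ ∨ K = K₂ ∨ K = K₃) ∧
      A K₃ ≤ A K₂ ∧ A K₂ ≤ A K₁ ∧
      (Odd n → A K₁ = (n - 1) / 2 ∧ A K₂ = (n - 1) / 2 ∧ A K₃ = 1) ∧
      (Even n → A K₁ = n / 2 ∧ A K₂ = n / 2 - 1 ∧ A K₃ = 1) := by
    rcases Nat.even_or_odd n with heven | hodd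
    · -- even case
      obtain ⟨l, hl⟩ := heven
      have hnm : n = 2 * m := by omega
      have hKv : A (c v) < m := by
        rcases Nat.lt_or_ge (A (c v)) m with h | h
        · exact h
        · exfalso
          have heq : 2 * A (c v) = n := by have := hAle (c v); omega
          exact (hbound (c v)).2 heq hvsupp
      have hsq' : m * m + (m - 1) * (m - 1) + 1
          ≤ ∑ K : Gd.ConnectedComponent, A K * A K := by
        have : n - 1 - m = m - 1 := by omega
        rw [this] at hsq
        exact hsq
      obtain ⟨K₁, K₂, K₃, h12, h13, h23, ha1, ha2, ha3, hcov⟩ :=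
        classify_even A m (by omega) hpos hAle (c v) hKv (by omega) hsq'
      refine ⟨K₁, K₂, K₃, h12, h13, h23, hcov, by omega, by omega, ?_, ?_⟩
      · intro hoddn
        exact absurd (Nat.not_odd_iff_even.mpr ⟨l, hl⟩ hoddn) id
      · intro _
        exact ⟨by omega, by omega, by omega⟩
    · -- odd case
      obtain ⟨l, hl⟩ := hodd
      have hnm : n = 2 * m + 1 := by omega
      have hsq' : 2 * (m * m) + 1 ≤ ∑ K : Gd.ConnectedComponent, A K * A K := by
        have : n - 1 - m = m := by omega
        rw [this] at hsq
        omega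
      obtain ⟨K₁, K₂, K₃, h12, h13, h23, ha1, ha2, ha3, hcov⟩ :=
        classify_odd A m (by omega) hpos hAle (by omega) hsq'
      refine ⟨K₁, K₂, K₃, h12, h13, h23, hcov, by omega, by omega, ?_, ?_⟩
      · intro _
        exact ⟨by omega, by omega, by omega⟩
      · intro hevenn
        rw [Nat.even_iff] at hevenn
        omega
  obtain ⟨K₁, K₂, K₃, h12, h13, h23, hcov, hle32, hle21, hoddc, hevenc⟩ := hfinish
  obtain ⟨w₁, hw₁⟩ := K₁.exists_rep
  obtain ⟨w₂, hw₂⟩ := K₂.exists_rep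
  obtain ⟨w₃, hw₃⟩ := K₃.exists_rep
  have hcs : ∀ w : Fin n, compSupp G H w = (c w).supp := fun w => rfl
  have hc1 : c w₁ = K₁ := hw₁
  have hc2 : c w₂ = K₂ := hw₂
  have hc3 : c w₃ = K₃ := hw₃
  have he1 : compSupp G H w₁ = K₁.supp := by rw [hcs, hc1]
  have he2 : compSupp G H w₂ = K₂.supp := by rw [hcs, hc2]
  have he3 : compSupp G H w₃ = K₃.supp := by rw [hcs, hc3]
  refine ⟨w₁, w₂, w₃, ⟨?_, ?_, ?_⟩, ?_, ?_, ?_, ?_, ?_⟩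
  · rw [he1, he2]
    intro h
    exact h12 (ConnectedComponent.supp_inj.mp h)
  · rw [he1, he3]
    intro h
    exact h13 (ConnectedComponent.supp_inj.mp h)
  · rw [he2, he3]
    intro h
    exact h23 (ConnectedComponent.supp_inj.mp h)
  · intro w
    rw [hcs w, he1, he2, he3]
    rcases hcov (c w) with h | h | h
    · left; rw [h]
    · right; left; rw [h]
    · right; right; rw [h]
  · rw [he2, he3, hsupp, hsupp]; exact hle32
  · rw [he1, he2, hsupp, hsupp]; exact hle21
  · intro hoddn
    obtain ⟨e1, e2, e3⟩ := hoddc hoddn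
    rw [he1, he2, he3, hsupp, hsupp, hsupp]
    exact ⟨e1, e2, e3⟩
  · intro hevenn
    obtain ⟨e1, e2, e3⟩ := hevenc hevenn
    rw [he1, he2, he3, hsupp, hsupp, hsupp]
    exact ⟨e1, e2, e3⟩
end

section
/- Let G = K_n with n ≥ 3, v a vertex, and H a minimum hitting set of the canonical line-bramble for v. Then |H| ≥ ((n−1)/2)·((n−1)/2) + (n−1) if n is odd, and |H| ≥ ((n−2)/2)·(n/2) + (n−1) if n is even. -/
open SimpleGraph

-- Auxiliary lemmas
section Aux
open Finset

-- Auxiliary numeric lemmas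
lemma aux_mul_lb {a b : ℕ} (ha : 1 ≤ a) (hb : 1 ≤ b) : a + b - 1 ≤ a * b := by
  obtain ⟨a, rfl⟩ := Nat.exists_eq_add_of_le ha
  obtain ⟨b, rfl⟩ := Nat.exists_eq_add_of_le hb
  have h : 1 + a + (1 + b) - 1 = 1 + a + b := by omega
  rw [h]
  nlinarith

lemma aux_key_odd {α : Type} (m : ℕ) (P : Finset α) (f : α → ℕ)
    (hsum : ∑ C ∈ P, f C = 2 * m + 1)
    (hub : ∀ C ∈ P, f C ≤ m) (hlb : ∀ C ∈ P, 1 ≤ f C) :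
    2 * (m * m) + 4 * m ≤ ∑ C ∈ P, f C * (2 * m + 1 - f C) := by
  have split : ∀ C ∈ P, f C * (2 * m + 1 - f C) = f C * (m + 1) + f C * (m - f C) := by
    intro C hC
    have h1 := hub C hC
    have h2 : 2 * m + 1 - f C = (m + 1) + (m - f C) := by omega
    rw [h2, Nat.mul_add]
  rw [Finset.sum_congr rfl split, Finset.sum_add_distrib, ← Finset.sum_mul, hsum]
  have hS : m - 1 ≤ ∑ C ∈ P, f C * (m - f C) := by
    by_cases hall : ∀ C ∈ P, f C = m
    · have h1 : ∑ C ∈ P, f C = P.card * m := by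
        rw [Finset.sum_congr rfl hall, Finset.sum_const, smul_eq_mul]
      have h2 : m ∣ 2 * m + 1 := by
        rw [← hsum, h1]; exact dvd_mul_left m P.card
      have h3' := Nat.dvd_sub h2 (dvd_mul_left m 2)
      have he : 2 * m + 1 - 2 * m = 1 := by omega
      rw [he] at h3'
      have h3 : m ∣ 1 := h3'
      have : m ≤ 1 := Nat.le_of_dvd one_pos h3
      omega
    · push_neg at hall
      obtain ⟨C, hC, hCne⟩ := hall
      have h1 := hub C hC
      have h2 := hlb C hC
      have h3 : 1 ≤ m - f C := by omega
      calc m - 1 = f C + (m - f C) - 1 := by omega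
        _ ≤ f C * (m - f C) := aux_mul_lb h2 h3
        _ ≤ ∑ C ∈ P, f C * (m - f C) :=
            Finset.single_le_sum (f := fun C => f C * (m - f C)) (fun i _ => Nat.zero_le _) hC
  have expand : (2 * m + 1) * (m + 1) = 2 * (m * m) + 3 * m + 1 := by ring
  rw [expand]
  generalize m * m = q
  omega

lemma aux_key_even {α : Type} [DecidableEq α] (m : ℕ) (hm : 2 ≤ m) (P : Finset α) (f : α → ℕ)
    (Cv : α) (hCv : Cv ∈ P) (hCvle : f Cv ≤ m - 1)
    (hsum : ∑ C ∈ P, f C = 2 * m)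
    (hub : ∀ C ∈ P, f C ≤ m) (hlb : ∀ C ∈ P, 1 ≤ f C) :
    2 * (m * m) + 2 * m ≤ ∑ C ∈ P, f C * (2 * m - f C) + 2 := by
  have split : ∀ C ∈ P, f C * (2 * m - f C) = f C * m + f C * (m - f C) := by
    intro C hC
    have h1 := hub C hC
    have h2 : 2 * m - f C = m + (m - f C) := by omega
    rw [h2, Nat.mul_add]
  rw [Finset.sum_congr rfl split, Finset.sum_add_distrib, ← Finset.sum_mul, hsum]
  have hS : 2 * m - 2 ≤ ∑ C ∈ P, f C * (m - f C) := by
    have hex : ∃ C ∈ P.erase Cv, f C ≤ m - 1 := by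
      by_contra hno
      push_neg at hno
      have hall : ∀ C ∈ P.erase Cv, f C = m := by
        intro C hC
        have := hub C (Finset.mem_of_mem_erase hC)
        have := hno C hC
        omega
      have h1 : ∑ C ∈ P.erase Cv, f C = (P.erase Cv).card * m := by
        rw [Finset.sum_congr rfl hall, Finset.sum_const, smul_eq_mul]
      have h2 : f Cv + ∑ C ∈ P.erase Cv, f C = 2 * m := by
        rw [Finset.add_sum_erase P f hCv, hsum]
      rw [h1] at h2
      have hfv := hlb Cv hCv
      rcases Nat.lt_or_ge (P.erase Cv).card 2 with hk | hk
      · interval_cases h : (P.erase Cv).card <;> omega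
      · have : 2 * m ≤ (P.erase Cv).card * m := Nat.mul_le_mul_right m hk
        omega
    obtain ⟨C, hC, hCle⟩ := hex
    have hCP := Finset.mem_of_mem_erase hC
    have t1 : m - 1 ≤ f Cv * (m - f Cv) := by
      have h2 := hlb Cv hCv
      have h3 : 1 ≤ m - f Cv := by omega
      calc m - 1 = f Cv + (m - f Cv) - 1 := by omega
        _ ≤ f Cv * (m - f Cv) := aux_mul_lb h2 h3
    have t2 : m - 1 ≤ f C * (m - f C) := by
      have h2 := hlb C hCP
      have h3 : 1 ≤ m - f C := by omega
      calc m - 1 = f C + (m - f C) - 1 := by omega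
        _ ≤ f C * (m - f C) := aux_mul_lb h2 h3
    have t3 : f C * (m - f C) ≤ ∑ C' ∈ P.erase Cv, f C' * (m - f C') :=
      Finset.single_le_sum (f := fun C' => f C' * (m - f C')) (fun i _ => Nat.zero_le _) hC
    have t4 : f Cv * (m - f Cv) + ∑ C' ∈ P.erase Cv, f C' * (m - f C')
        = ∑ C' ∈ P, f C' * (m - f C') :=
      Finset.add_sum_erase P (fun C' => f C' * (m - f C')) hCv
    omega
  have expand : 2 * m * m = 2 * (m * m) := by ring
  rw [expand]
  generalize m * m = q
  omega

end Aux

/-- lower bound on the size of a minimum hitting set for `K_n`. -/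
theorem completeGraph_hitting_lower_bound (n : ℕ) (hn : 3 ≤ n) (v : Fin n)
    (H : Finset (Sym2 (Fin n)))
    (hmin : IsMinLBHitting (⊤ : SimpleGraph (Fin n))
      (canonicalLineBramble (⊤ : SimpleGraph (Fin n)) v) H) :
    (Odd n → ((n - 1) / 2) * ((n - 1) / 2) + (n - 1) ≤ H.card) ∧
    (Even n → ((n - 2) / 2) * (n / 2) + (n - 1) ≤ H.card) := by
  classical
  obtain ⟨⟨hHsub, hHhit⟩, _hminim⟩ := hmin
  set G : SimpleGraph (Fin n) := ⊤ with hG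
  set G' : SimpleGraph (Fin n) := G.deleteEdges ↑H with hG'
  set supp : Fin n → Set (Fin n) := fun u => (G'.connectedComponentMk u).supp with hsuppdef
  have hmem : ∀ u : Fin n, u ∈ supp u := by
    intro u
    simp [hsuppdef, SimpleGraph.ConnectedComponent.mem_supp_iff]
  have hmemiff : ∀ u w : Fin n, w ∈ supp u ↔
      G'.connectedComponentMk w = G'.connectedComponentMk u := by
    intro u w
    simp [hsuppdef, SimpleGraph.ConnectedComponent.mem_supp_iff]
  set A : Fin n → Finset (Fin n) := fun u => (supp u).toFinset with hAdef
  have hAmemiff : ∀ u w : Fin n, w ∈ A u ↔ w ∈ supp u := by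
    intro u w; simp [hAdef]
  have hAeq : ∀ u w : Fin n, w ∈ A u → A w = A u := by
    intro u w hw
    rw [hAmemiff, hmemiff] at hw
    simp only [hAdef, hsuppdef]
    rw [hw]
  -- Step A : component sizes
  have hsize : ∀ u : Fin n, 2 * (A u).card ≤ n ∧ (v ∈ A u → 2 * (A u).card ≠ n) := by
    intro u
    set X : G.Subgraph :=
      { verts := supp u
        Adj := fun a b => a ∈ supp u ∧ b ∈ supp u ∧ G'.Adj a b
        adj_sub := fun h => ((SimpleGraph.deleteEdges_adj).mp h.2.2).1
        edge_vert := fun h => h.1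
        symm := ⟨fun a b h => ⟨h.2.1, h.1, h.2.2.symm⟩⟩ } with hXdef
    have hXverts : X.verts = supp u := rfl
    have hXconn : X.Connected := by
      rw [SimpleGraph.Subgraph.connected_iff]
      constructor
      · rw [SimpleGraph.Subgraph.preconnected_iff]
        have lift : ∀ (a b : Fin n), G'.Walk a b → ∀ (ha : a ∈ supp u) (hb : b ∈ supp u),
            X.coe.Reachable ⟨a, ha⟩ ⟨b, hb⟩ := by
          intro a b p
          induction p with
          | nil => intro ha hb; exact SimpleGraph.Reachable.refl _
          | @cons a c b h p ih =>
            intro ha hb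
            have hc : c ∈ supp u := by
              rw [hmemiff]
              rw [← SimpleGraph.ConnectedComponent.connectedComponentMk_eq_of_adj h]
              exact (hmemiff u a).mp ha
            have hadj : X.coe.Adj ⟨a, ha⟩ ⟨c, hc⟩ := by
              simp only [SimpleGraph.Subgraph.coe_adj]
              exact ⟨ha, hc, h⟩
            exact hadj.reachable.trans (ih hc hb)
        rintro ⟨a, ha⟩ ⟨b, hb⟩
        have hreach : G'.Reachable a b := by
          apply SimpleGraph.ConnectedComponent.exact
          rw [(hmemiff u a).mp ha, (hmemiff u b).mp hb]
        obtain ⟨p⟩ := hreach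
        exact lift a b p ha hb
      · exact ⟨u, hmem u⟩
    have hXfree : ∀ e ∈ H, e ∉ X.edgeSet := by
      intro e heH
      induction e using Sym2.ind with
      | _ a b =>
        intro heX
        rw [SimpleGraph.Subgraph.mem_edgeSet] at heX
        have hdel := ((SimpleGraph.deleteEdges_adj).mp heX.2.2).2
        exact hdel (by simpa using heH)
    have hkey : X ∉ canonicalLineBramble G v := by
      intro hX
      obtain ⟨e, heH, heX⟩ := hHhit X hX
      exact hXfree e heH heX
    have hncard : X.verts.ncard = (A u).card := by
      rw [hXverts, Set.ncard_eq_toFinset_card' (supp u)]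
    have hNat : Nat.card (Fin n) = n := by simp
    have h2 : ¬ (Nat.card (Fin n) < 2 * X.verts.ncard ∨
        (2 * X.verts.ncard = Nat.card (Fin n) ∧ v ∈ X.verts)) := fun h => hkey ⟨hXconn, h⟩
    push_neg at h2
    rw [hNat, hncard] at h2
    refine ⟨h2.1, fun hv heq => ?_⟩
    exact h2.2 heq (by rw [hXverts]; exact (hAmemiff u v).mp hv)
  -- cross edges must be in H
  have hcross : ∀ u w : Fin n, w ∉ supp u → s(u, w) ∈ H := by
    intro u w hw
    by_contra hnot
    have hne : u ≠ w := by rintro rfl; exact hw (hmem u)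
    have hadj : G'.Adj u w := by
      rw [hG', SimpleGraph.deleteEdges_adj]
      exact ⟨by simp [hG, hne], by simpa using hnot⟩
    apply hw
    rw [hmemiff]
    exact (SimpleGraph.ConnectedComponent.connectedComponentMk_eq_of_adj hadj).symm
  -- degree bound
  have hdeg : ∀ u : Fin n, n - (A u).card ≤ (H.filter (fun e => u ∈ e)).card := by
    intro u
    have hinj : ((A u)ᶜ).card ≤ (H.filter (fun e => u ∈ e)).card := by
      apply Finset.card_le_card_of_injOn (fun w => s(u, w))
      · intro w hw
        rw [Finset.mem_coe, Finset.mem_compl, hAmemiff] at hw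
        rw [Finset.mem_coe, Finset.mem_filter]
        exact ⟨hcross u w hw, by simp⟩
      · intro w1 _ w2 _ hEq
        rcases Sym2.eq_iff.mp hEq with ⟨-, h⟩ | ⟨h1, h2⟩
        · exact h
        · rw [h2, h1]
    have hc : ((A u)ᶜ).card = n - (A u).card := by
      rw [Finset.card_compl, Fintype.card_fin]
    omega
  -- double counting
  have hij : ∀ e ∈ H, (Finset.univ.filter (fun u : Fin n => u ∈ e)).card = 2 := by
    intro e heH
    induction e using Sym2.ind with
    | _ a b =>
      have hadj : G.Adj a b := hHsub (Finset.mem_coe.mpr heH)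
      have hab : a ≠ b := by simpa [hG] using hadj
      have hset : (Finset.univ.filter (fun u : Fin n => u ∈ s(a, b))) = {a, b} := by
        ext u; simp [Sym2.mem_iff]
      rw [hset, Finset.card_insert_of_notMem (by simpa using hab), Finset.card_singleton]
  have hdouble : ∑ u : Fin n, (H.filter (fun e => u ∈ e)).card = 2 * H.card := by
    calc ∑ u : Fin n, (H.filter (fun e => u ∈ e)).card
        = ∑ u : Fin n, ∑ e ∈ H, if u ∈ e then 1 else 0 :=
          Finset.sum_congr rfl (fun u _ => Finset.card_filter _ _)
      _ = ∑ e ∈ H, ∑ u : Fin n, if u ∈ e then 1 else 0 := Finset.sum_comm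
      _ = ∑ e ∈ H, 2 := Finset.sum_congr rfl
          (fun e he => (Finset.card_filter _ _).symm.trans (hij e he))
      _ = 2 * H.card := by rw [Finset.sum_const, smul_eq_mul, mul_comm]
  -- partition into components
  set P : Finset (Finset (Fin n)) := Finset.univ.image A with hPdef
  have hfiber : ∀ C ∈ P, Finset.univ.filter (fun u => A u = C) = C := by
    intro C hC
    obtain ⟨w, -, rfl⟩ := Finset.mem_image.mp hC
    ext x
    simp only [Finset.mem_filter, Finset.mem_univ, true_and]
    constructor
    · intro h; rw [← h]; exact (hAmemiff x x).mpr (hmem x)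
    · intro hx; exact hAeq w x hx
  have hsumAll : ∀ t : Finset (Fin n) → ℕ, ∑ u : Fin n, t (A u) = ∑ C ∈ P, C.card * t C := by
    intro t
    rw [← Finset.sum_fiberwise_of_maps_to'
      (fun u _ => Finset.mem_image_of_mem A (Finset.mem_univ u)) t]
    apply Finset.sum_congr rfl
    intro C hC
    rw [Finset.sum_const, smul_eq_mul, hfiber C hC]
  have hcardsum : ∑ C ∈ P, C.card = n := by
    have h := hsumAll (fun _ => 1)
    simp only [mul_one, Finset.sum_const, Finset.card_univ, Fintype.card_fin,
      smul_eq_mul] at h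
    omega
  -- main inequality
  have hmain : ∑ C ∈ P, C.card * (n - C.card) ≤ 2 * H.card := by
    have h1 : ∑ u : Fin n, (n - (A u).card) = ∑ C ∈ P, C.card * (n - C.card) :=
      hsumAll (fun C => n - C.card)
    rw [← h1]
    calc ∑ u : Fin n, (n - (A u).card)
        ≤ ∑ u : Fin n, (H.filter (fun e => u ∈ e)).card :=
          Finset.sum_le_sum (fun u _ => hdeg u)
      _ = 2 * H.card := hdouble
  -- part constraints
  have hP1 : ∀ C ∈ P, 1 ≤ C.card := by
    intro C hC
    obtain ⟨w, -, rfl⟩ := Finset.mem_image.mp hC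
    exact Finset.card_pos.mpr ⟨w, (hAmemiff w w).mpr (hmem w)⟩
  have hP2 : ∀ C ∈ P, 2 * C.card ≤ n := by
    intro C hC
    obtain ⟨w, -, rfl⟩ := Finset.mem_image.mp hC
    exact (hsize w).1
  have hPv : A v ∈ P := Finset.mem_image_of_mem A (Finset.mem_univ v)
  have hPvne : 2 * (A v).card ≠ n := (hsize v).2 ((hAmemiff v v).mpr (hmem v))
  constructor
  · -- odd case
    intro hodd
    obtain ⟨m, hm⟩ := hodd
    have hb : 2 * (m * m) + 4 * m ≤ ∑ C ∈ P, C.card * (2 * m + 1 - C.card) := by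
      apply aux_key_odd m P (fun C => C.card)
      · rw [hcardsum]; omega
      · intro C hC; have := hP2 C hC; omega
      · exact hP1
    have heq : ∑ C ∈ P, C.card * (2 * m + 1 - C.card) = ∑ C ∈ P, C.card * (n - C.card) := by
      apply Finset.sum_congr rfl
      intro C hC
      congr 1
      omega
    rw [heq] at hb
    have hfin : 2 * (m * m) + 4 * m ≤ 2 * H.card := le_trans hb hmain
    have h1 : (n - 1) / 2 = m := by omega
    rw [h1]
    generalize m * m = q at hfin ⊢
    omega
  · -- even case
    intro heven
    obtain ⟨m, hm⟩ := heven
    have hm2 : 2 ≤ m := by omega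
    have hb : 2 * (m * m) + 2 * m ≤ ∑ C ∈ P, C.card * (2 * m - C.card) + 2 := by
      apply aux_key_even m hm2 P (fun C => C.card) (A v) hPv
      · have h1 := hP2 (A v) hPv
        have h2 := hPvne
        omega
      · rw [hcardsum]; omega
      · intro C hC; have := hP2 C hC; omega
      · exact hP1
    have heq : ∑ C ∈ P, C.card * (2 * m - C.card) = ∑ C ∈ P, C.card * (n - C.card) := by
      apply Finset.sum_congr rfl
      intro C hC
      congr 1
      omega
    rw [heq] at hb
    have hfin : 2 * (m * m) + 2 * m ≤ 2 * H.card + 2 := le_trans hb (by omega)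
    have h1 : (n - 2) / 2 = m - 1 := by omega
    have h2 : n / 2 = m := by omega
    rw [h1, h2]
    have h3 : (m - 1) * m = m * m - m := by rw [Nat.sub_mul, one_mul]
    rw [h3]
    have h4 : m ≤ m * m := Nat.le_mul_of_pos_left m (by omega)
    generalize m * m = q at hfin h4 ⊢
    omega
end

section
/- Let n ≥ 3, let the vertices of K_n be labelled 1, …, n, and for each i ∈ {1,…,n} let A_i be the set of edges {ij : j ≠ i} ∪ {uw : u < i < w}, viewed as a set of vertices of the line graph L(K_n). Then the path on nodes 1, …, n with bags A₁, …, A_n is a path decomposition of L(K_n), and its width equals ((n−1)/2)² + n − 2 if n is odd, and ((n−2)/2)(n/2) + n − 2 if n is even. -/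
open SimpleGraph

lemma key_mul_aux (m k : ℕ) : k * (m - k) ≤ (m/2) * (m - m/2) := by
  rcases le_or_gt m k with h | h
  · simp [Nat.sub_eq_zero_of_le h]
  have main : ∀ a : ℕ, 2*a ≤ m → m ≤ 2*a+1 → k * (m - k) ≤ a * (m - a) := by
    intro a h1 h2
    have h1' : 2*(a:ℤ) ≤ m := by exact_mod_cast h1
    have h2' : (m:ℤ) ≤ 2*a+1 := by exact_mod_cast h2
    zify [h.le, (by omega : a ≤ m)]
    rcases le_or_gt k a with h3 | h3
    · have h3' : (k:ℤ) ≤ a := by exact_mod_cast h3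
      nlinarith [mul_nonneg (sub_nonneg.2 h3') (sub_nonneg.2 (by linarith : (k:ℤ) ≤ m - a))]
    · have h3' : (a:ℤ) + 1 ≤ k := by exact_mod_cast h3
      nlinarith [mul_nonneg (sub_nonneg.2 (by linarith : (a:ℤ) ≤ k))
        (sub_nonneg.2 (by linarith : (m:ℤ) - a ≤ k))]
  exact main (m/2) (by omega) (by omega)

lemma rep_aux {n : ℕ} (e : Sym2 (Fin n)) (he : ¬ e.IsDiag) :
    ∃ u w : Fin n, u < w ∧ e = s(u, w) := by
  induction e using Sym2.inductionOn with
  | hf a b =>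
    rw [Sym2.mk_isDiag_iff] at he
    rcases lt_or_gt_of_ne he with h | h
    · exact ⟨a, b, h, rfl⟩
    · exact ⟨b, a, h, Sym2.eq_swap.symm⟩

lemma id_aux (n a : ℕ) (ha : a < n) : (a+1)*(n-a) - 1 = a*(n-1-a) + (n-1) := by
  have hb : n - a = (n-1-a)+1 := by omega
  rw [hb]
  have h2 : (a+1)*((n-1-a)+1) = a*(n-1-a) + (a + (n-1-a) + 1) := by ring
  rw [h2]
  generalize a*(n-1-a) = c
  omega
/-- the explicit bags give a path decomposition of `L(K_n)` of the
stated width. -/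
theorem completeGraph_path_decomposition (n : ℕ) (hn : 3 ≤ n) :
    let G : SimpleGraph (Fin n) := ⊤
    let A : Fin n → Set G.edgeSet := fun i =>
      {e | (i ∈ (e : Sym2 (Fin n))) ∨
        ∃ u w : Fin n, (e : Sym2 (Fin n)) = s(u, w) ∧ u < i ∧ i < w}
    let W : ℕ := if Odd n then ((n - 1) / 2) * ((n - 1) / 2) + n - 2
                 else ((n - 2) / 2) * (n / 2) + n - 2
    (∀ e : G.edgeSet, ∃ i, e ∈ A i) ∧
    (∀ e f : G.edgeSet, G.lineGraph.Adj e f → ∃ i, e ∈ A i ∧ f ∈ A i) ∧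
    (∀ (e : G.edgeSet) (i j l : Fin n), i ≤ j → j ≤ l → e ∈ A i → e ∈ A l → e ∈ A j) ∧
    (∀ i, (A i).ncard ≤ W + 1) ∧ (∃ i, (A i).ncard = W + 1) := by
  intro G A W
  classical
  have hnd : ∀ e : G.edgeSet, ¬ (e : Sym2 (Fin n)).IsDiag := by
    intro e
    have h2 : (e : Sym2 (Fin n)) ∈ {e : Sym2 (Fin n) | ¬ e.IsDiag} := by
      exact (Set.ext_iff.1 (show G.edgeSet = Sym2.diagSetᶜ from edgeSet_top) _).1 e.2
    exact h2
  have hmemA : ∀ (e : G.edgeSet) (i : Fin n),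
      e ∈ A i ↔ ∃ u w : Fin n, u < w ∧ (e : Sym2 (Fin n)) = s(u,w) ∧ u ≤ i ∧ i ≤ w := by
    intro e i
    obtain ⟨u, w, huw, hrep⟩ := rep_aux (e : Sym2 (Fin n)) (hnd e)
    simp only [A, Set.mem_setOf_eq]
    constructor
    · rintro (hm | ⟨a, b, hab, ha, hb⟩)
      · rw [hrep, Sym2.mem_iff] at hm
        rcases hm with rfl | rfl
        · exact ⟨i, w, huw, hrep, le_refl i, huw.le⟩
        · exact ⟨u, i, huw, hrep, huw.le, le_refl i⟩
      · rw [hrep, Sym2.eq_iff] at hab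
        rcases hab with ⟨h1, h2⟩ | ⟨h1, h2⟩
        · exact ⟨u, w, huw, hrep, h1 ▸ ha.le, h2 ▸ hb.le⟩
        · exfalso
          have hab' : a < b := ha.trans hb
          rw [h1, h2] at huw
          exact absurd hab' (asymm huw)
    · rintro ⟨u', w', hu'w', hrep', hui, hiw⟩
      rcases eq_or_lt_of_le hui with rfl | h1
      · left; rw [hrep']; exact Sym2.mem_mk_left _ _
      · rcases eq_or_lt_of_le hiw with rfl | h2
        · left; rw [hrep']; exact Sym2.mem_mk_right _ _
        · right; exact ⟨u', w', hrep', h1, h2⟩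
  have hcard : ∀ i : Fin n, (A i).ncard = (i.val+1)*(n - i.val) - 1 := by
    intro i
    set T : Finset (Sym2 (Fin n)) :=
      (Finset.Iic i ×ˢ Finset.Ici i).image (fun p => s(p.1, p.2)) with hT
    have hinj : Set.InjOn (fun p : Fin n × Fin n => s(p.1, p.2))
        ↑(Finset.Iic i ×ˢ Finset.Ici i) := by
      rintro ⟨a,b⟩ hab ⟨c,d⟩ hcd h
      simp only [Finset.coe_product, Set.mem_prod, Finset.mem_coe, Finset.mem_Iic,
        Finset.mem_Ici] at hab hcd
      simp only [Sym2.eq_iff] at h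
      rcases h with ⟨h1, h2⟩ | ⟨h1, h2⟩
      · exact Prod.ext h1 h2
      · have hia : i ≤ a := h1 ▸ hcd.2
        have hbi : b ≤ i := h2 ▸ hcd.1
        have ha' : a = i := le_antisymm hab.1 hia
        have hb' : b = i := le_antisymm hbi hab.2
        have hc' : c = i := h2 ▸ hb'
        have hd' : d = i := h1 ▸ ha'
        exact Prod.ext (by rw [ha', hc']) (by rw [hb', hd'])
    have hTcard : T.card = (i.val+1)*(n - i.val) := by
      rw [hT, Finset.card_image_of_injOn hinj, Finset.card_product, Fin.card_Iic, Fin.card_Ici]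
    have hmemT : s(i,i) ∈ T := by
      rw [hT]
      exact Finset.mem_image.2 ⟨(i,i), by simp, rfl⟩
    have hScard : (T \ {s(i,i)}).card = (i.val+1)*(n - i.val) - 1 := by
      rw [Finset.card_sdiff_of_subset (Finset.singleton_subset_iff.2 hmemT), hTcard,
        Finset.card_singleton]
    have himg : Subtype.val '' (A i) = ↑(T \ {s(i,i)}) := by
      ext x
      constructor
      · rintro ⟨e, he, rfl⟩
        obtain ⟨u, w, huw, hrep, h1, h2⟩ := (hmemA e i).1 he
        rw [Finset.coe_sdiff, Set.mem_diff]
        constructor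
        · rw [Finset.mem_coe, hT, Finset.mem_image]
          exact ⟨(u,w), by simp [Finset.mem_product, h1, h2], hrep.symm⟩
        · simp only [Finset.coe_singleton, Set.mem_singleton_iff]
          rw [hrep]
          intro hco
          rw [Sym2.eq_iff] at hco
          rcases hco with ⟨h3, h4⟩ | ⟨h3, h4⟩ <;> exact absurd huw (by rw [h3, h4]; exact lt_irrefl i)
      · intro hx
        rw [Finset.mem_coe, Finset.mem_sdiff, Finset.mem_singleton] at hx
        obtain ⟨hxT, hxne⟩ := hx
        rw [hT, Finset.mem_image] at hxT
        obtain ⟨⟨u,w⟩, hp, rfl⟩ := hxT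
        rw [Finset.mem_product, Finset.mem_Iic, Finset.mem_Ici] at hp
        have huw : u < w := by
          rcases eq_or_lt_of_le (hp.1.trans hp.2) with heq | h
          · exfalso
            apply hxne
            have heq' : u = w := heq
            have hui : u = i := le_antisymm hp.1 (by rw [heq']; exact hp.2)
            have hwi : w = i := by rw [← heq']; exact hui
            rw [hui, hwi]
          · exact h
        have hedge : s(u,w) ∈ G.edgeSet := by
          rw [mem_edgeSet]
          exact huw.ne
        refine ⟨⟨s(u,w), hedge⟩, ?_, rfl⟩
        exact (hmemA _ i).2 ⟨u, w, huw, rfl, hp.1, hp.2⟩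
    calc (A i).ncard = (Subtype.val '' (A i)).ncard :=
          (Set.ncard_image_of_injective _ Subtype.val_injective).symm
      _ = ((T \ {s(i,i)} : Finset (Sym2 (Fin n))) : Set (Sym2 (Fin n))).ncard := by rw [himg]
      _ = (T \ {s(i,i)}).card := Set.ncard_coe_finset _
      _ = _ := hScard
  have hW1 : W + 1 = ((n-1)/2) * ((n-1) - (n-1)/2) + (n-1) := by
    show (if Odd n then ((n - 1) / 2) * ((n - 1) / 2) + n - 2
                 else ((n - 2) / 2) * (n / 2) + n - 2) + 1 = _
    by_cases hodd : Odd n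
    · rw [if_pos hodd]
      have hm := Nat.odd_iff.mp hodd
      have h1 : (n-1) - (n-1)/2 = (n-1)/2 := by omega
      rw [h1]
      generalize ((n-1)/2)*((n-1)/2) = c
      omega
    · rw [if_neg hodd]
      have hm := Nat.even_iff.mp (Nat.not_odd_iff_even.mp hodd)
      have h1 : (n-1)/2 = (n-2)/2 := by omega
      have h2 : (n-1) - (n-1)/2 = n/2 := by omega
      rw [h2, h1]
      generalize ((n-2)/2)*(n/2) = c
      omega
  refine ⟨?_, ?_, ?_, ?_, ?_⟩
  · intro e
    obtain ⟨u, w, huw, hrep⟩ := rep_aux (e : Sym2 (Fin n)) (hnd e)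
    exact ⟨u, (hmemA e u).2 ⟨u, w, huw, hrep, le_refl u, huw.le⟩⟩
  · intro e f hadj
    rw [lineGraph_adj_iff_exists] at hadj
    obtain ⟨-, v, hv1, hv2⟩ := hadj
    exact ⟨v, Or.inl hv1, Or.inl hv2⟩
  · intro e i j l hij hjl hi hl
    obtain ⟨u, w, huw, hrep, h1, h2⟩ := (hmemA e i).1 hi
    obtain ⟨u', w', hu'w', hrep', h3, h4⟩ := (hmemA e l).1 hl
    have heq : s(u,w) = s(u',w') := by rw [← hrep, ← hrep']
    rw [Sym2.eq_iff] at heq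
    have hlw : l ≤ w := by
      rcases heq with ⟨h5, h6⟩ | ⟨h5, h6⟩
      · rw [h6]; exact h4
      · exfalso
        rw [h5, h6] at huw
        exact absurd hu'w' (asymm huw)
    exact (hmemA e j).2 ⟨u, w, huw, hrep, h1.trans hij, hjl.trans hlw⟩
  · intro i
    rw [hcard i, id_aux n i.val i.isLt, hW1]
    exact Nat.add_le_add_right (key_mul_aux (n-1) i.val) _
  · refine ⟨⟨(n-1)/2, by omega⟩, ?_⟩
    rw [hcard, hW1, id_aux n ((n-1)/2) (by omega)]
end
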